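/- arXiv:1212.0836 — 3 statements merged into one kernel-verified Lean document; each statement's English description precedes it below -/
import Mathlib

section
/- Let w be a string over the alphabet {m_1,…,m_{k+1}}. The following are equivalent: (1) w∗I(n,k) is a final state (all n elements in the output queue); (2) w can be partitioned into n disjoint subsequences, each equal to m_1 m_2 ⋯ m_{k+1}; (3) every prefix u of w satisfies |u|_1 ≥ |u|_2 ≥ ⋯ ≥ |u|_{k+1} ≥ 0, and |w|_1 = |w|_2 = ⋯ = |w|_{k+1} = n, where |u|_i denotes the number of occurrences of m_i in u. -/
/-- A configuration ("state") of a system of `k` stacks in series: container `0`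
is the input queue (front at the head of the list), containers `1, …, k` are the
stacks (top at the head), and container `k+1` is the output queue (front at the head). -/
abbrev Conf (k : ℕ) : Type := Fin (k + 2) → List ℕ

/-- Apply the move `m_{i+1}` (for `i : Fin (k+1)`): remove the element at the head of
container `i` and move it to container `i+1` (pushed on top if the destination is a
stack, appended at the back if it is the output queue).  Returns `none` (the illegal
state `∅`) if the source container is empty. -/
def applyMove {k : ℕ} (i : Fin (k + 1)) (s : Conf k) : Option (Conf k) :=
  match s i.castSucc with
  | [] => none
  | x :: rest =>
      some fun j =>
        if j = i.castSucc then rest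
        else if j = i.succ then
          (if (j : ℕ) = k + 1 then s j ++ [x] else x :: s j)
        else s j

/-- The action `w ∗ s` of a string of moves on an (optional) state; moves are applied
left to right, and the illegal state `none` is absorbing. -/
def act {k : ℕ} (w : List (Fin (k + 1))) (s : Option (Conf k)) : Option (Conf k) :=
  w.foldl (fun t i => t.bind (applyMove i)) s

/-- The initial state `I(n,k)`: the input queue holds `1, …, n` (front to back),
and everything else is empty. -/
def initConf (n k : ℕ) : Conf k :=
  fun j => if (j : ℕ) = 0 then List.range' 1 n else []

/-- The final state whose output queue holds `out` (front to back), all else empty. -/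
def finalConf (k : ℕ) (out : List ℕ) : Conf k :=
  fun j => if (j : ℕ) = k + 1 then out else []

/-- `π ∈ Sₙ` is generated by `k` stacks in series if some string of moves takes
`I(n,k)` to the final state with output queue `π(1), …, π(n)` (front to back). -/
def Generates (n k : ℕ) (π : Equiv.Perm (Fin n)) : Prop :=
  ∃ w : List (Fin (k + 1)),
    act w (some (initConf n k)) = some (finalConf k (List.ofFn fun j => (π j : ℕ) + 1))

/-- `P(n,k)`, the set of permutations of `n` elements generated by `k` stacks in series. -/
def GenPerms (n k : ℕ) : Set (Equiv.Perm (Fin n)) := {π | Generates n k π}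

/-- `k_n`, the least number of stacks needed to generate (equivalently, sort) every
permutation of `n` elements. -/
noncomputable def kStacks (n : ℕ) : ℕ := sInf {k | ∀ π : Equiv.Perm (Fin n), Generates n k π}

/-- Two move strings are equivalent, `u ∼ v`, if they act identically on every state. -/
def MoveEquiv {k : ℕ} (u v : List (Fin (k + 1))) : Prop :=
  ∀ s : Conf k, act u (some s) = act v (some s)
section Aux
open List
-- basic act lemmas
lemma act_none {k : ℕ} (w : List (Fin (k+1))) : act w (none : Option (Conf k)) = none := by
  induction w with
  | nil => rfl
  | cons a l ih => simpa [act] using ih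

lemma act_append {k : ℕ} (u v : List (Fin (k+1))) (s : Option (Conf k)) :
    act (u ++ v) s = act v (act u s) := by
  simp [act, List.foldl_append]

lemma act_concat {k : ℕ} (u : List (Fin (k+1))) (m : Fin (k+1)) (s : Option (Conf k)) :
    act (u ++ [m]) s = (act u s).bind (applyMove m) := by
  rw [act_append]; rfl

/-- counts of moves, by natural-number value -/
def cnt {k : ℕ} (u : List (Fin (k+1))) (m : ℕ) : ℕ := List.countP (fun x : Fin (k+1) => x.val == m) u

lemma count_eq_cnt {k : ℕ} (u : List (Fin (k+1))) (i : Fin (k+1)) : u.count i = cnt u i := by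
  rw [List.count_eq_countP, cnt]
  refine List.countP_congr ?_
  intro x _
  rw [beq_iff_eq, beq_iff_eq, Fin.ext_iff]

lemma cnt_concat {k : ℕ} (u : List (Fin (k+1))) (i : Fin (k+1)) (m : ℕ) :
    cnt (u ++ [i]) m = cnt u m + (if (i : ℕ) = m then 1 else 0) := by
  simp only [cnt, List.countP_append, List.countP_cons, List.countP_nil, Nat.zero_add]
  by_cases h : (i : ℕ) = m <;> simp [h]

lemma cnt_top {k : ℕ} (u : List (Fin (k+1))) : cnt u (k+1) = 0 := by
  simp only [cnt, List.countP_eq_zero]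
  intro x _
  have h := x.isLt
  simp only [beq_iff_eq]
  omega

lemma run_lengths {n k : ℕ} (u : List (Fin (k+1))) :
    ∀ s : Conf k, act u (some (initConf n k)) = some s →
    ∀ j : Fin (k+2), (s j).length + cnt u (j:ℕ)
      = if (j:ℕ) = 0 then n else cnt u ((j:ℕ) - 1) := by
  induction u using List.reverseRecOn with
  | nil =>
    intro s hs j
    have : s = initConf n k := (Option.some.inj hs).symm
    subst this
    simp only [cnt, List.countP_nil, Nat.add_zero, initConf]
    split <;> simp_all
  | append_singleton u m ih =>
    intro s hs j
    rw [act_concat] at hs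
    cases h' : act u (some (initConf n k)) with
    | none => rw [h'] at hs; simp at hs
    | some s' =>
      rw [h'] at hs
      simp only [Option.bind_some] at hs
      have ih' := ih s' h'
      cases hsrc : s' m.castSucc with
      | nil => simp only [applyMove.eq_def, hsrc] at hs; simp at hs
      | cons x rest =>
        simp only [applyMove.eq_def, hsrc] at hs
        have hseq := (Option.some.inj hs).symm
        have hm0 : ((m.castSucc : Fin (k+2)) : ℕ) = (m : ℕ) := rfl
        have hm1 : ((m.succ : Fin (k+2)) : ℕ) = (m : ℕ) + 1 := rfl
        by_cases h1 : j = m.castSucc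
        · have hsj : s j = rest := by rw [hseq]; simp [h1]
          rw [hsj]
          have hjv : (j : ℕ) = (m : ℕ) := by rw [h1]; exact hm0
          rw [hjv]
          have e1 : cnt (u ++ [m]) (m:ℕ) = cnt u (m:ℕ) + 1 := by
            rw [cnt_concat]; simp
          have ihm := ih' m.castSucc
          rw [hsrc] at ihm
          simp only [List.length_cons, hm0] at ihm
          rw [e1]
          by_cases hz : (m : ℕ) = 0
          · rw [if_pos hz] at ihm ⊢; omega
          · rw [if_neg hz] at ihm ⊢
            have e2 : cnt (u ++ [m]) ((m:ℕ) - 1) = cnt u ((m:ℕ) - 1) := by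
              rw [cnt_concat]; have : ¬ ((m:ℕ) = (m:ℕ) - 1) := by omega
              simp [this]
            rw [e2]; omega
        · by_cases h2 : j = m.succ
          · have hne : ¬ (m.succ = m.castSucc) := h2 ▸ h1
            have hsj : s j = if (j:ℕ) = k+1 then s' j ++ [x] else x :: s' j := by
              rw [hseq]; simp [h1, h2, hne]
            have hlen : (s j).length = (s' j).length + 1 := by
              rw [hsj]; split <;> simp
            have hjv : (j : ℕ) = (m : ℕ) + 1 := by rw [h2]; exact hm1
            rw [hlen, hjv]
            have ihm := ih' j
            rw [hjv] at ihm
            have e1 : cnt (u ++ [m]) ((m:ℕ) + 1) = cnt u ((m:ℕ)+1) := by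
              rw [cnt_concat]; have : ¬ ((m:ℕ) = (m:ℕ) + 1) := by omega
              simp [this]
            have e2 : cnt (u ++ [m]) ((m:ℕ) + 1 - 1) = cnt u (m:ℕ) + 1 := by
              rw [cnt_concat]; simp
            rw [e1, e2]
            simp only [Nat.add_eq_zero, Nat.succ_ne_zero, and_false, if_false,
              Nat.add_sub_cancel] at ihm ⊢
            omega
          · have hsj : s j = s' j := by rw [hseq]; simp [h1, h2]
            rw [hsj]
            have ihm := ih' j
            have hv1 : (j : ℕ) ≠ (m : ℕ) := by
              intro hc; exact h1 (Fin.ext (by rw [hc, hm0]))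
            have e1 : cnt (u ++ [m]) (j : ℕ) = cnt u (j:ℕ) := by
              rw [cnt_concat]; simp [Ne.symm hv1]
            rw [e1]
            by_cases hz : (j : ℕ) = 0
            · rw [if_pos hz] at ihm ⊢; exact ihm
            · rw [if_neg hz] at ihm ⊢
              have hv2 : (j : ℕ) ≠ (m : ℕ) + 1 := by
                intro hc; exact h2 (Fin.ext (by rw [hc, hm1]))
              have e2 : cnt (u ++ [m]) ((j:ℕ) - 1) = cnt u ((j:ℕ) - 1) := by
                rw [cnt_concat]
                have : ¬ ((m:ℕ) = (j:ℕ) - 1) := by omega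
                simp [this]
              rw [e2]; exact ihm

set_option maxHeartbeats 1600000
lemma run_legal {n k : ℕ} (w : List (Fin (k+1)))
    (hmono : ∀ t : ℕ, ∀ i j : Fin (k+1), i ≤ j → (w.take t).count j ≤ (w.take t).count i)
    (htot : w.count 0 ≤ n) :
    ∃ s : Conf k, act w (some (initConf n k)) = some s := by
  induction w using List.reverseRecOn with
  | nil => exact ⟨initConf n k, rfl⟩
  | append_singleton u m ih =>
    have hpre : ∀ t : ℕ, t ≤ u.length → u.take t = (u ++ [m]).take t := by
      intro t ht; rw [List.take_append_of_le_length ht]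
    have hmono' : ∀ t : ℕ, ∀ i j : Fin (k+1), i ≤ j → (u.take t).count j ≤ (u.take t).count i := by
      intro t i j hij
      rcases le_or_gt t u.length with h | h
      · rw [hpre t h]; exact hmono t i j hij
      · rw [List.take_of_length_le (le_of_lt h), ← List.take_length (l := u), hpre u.length le_rfl]
        exact hmono u.length i j hij
    have htot' : u.count 0 ≤ n :=
      le_trans (List.Sublist.count_le 0 (by simp)) htot
    obtain ⟨s', h'⟩ := ih hmono' htot'
    have lengths := run_lengths u s' h'
    have hpos : 0 < (s' m.castSucc).length := by
      have lm := lengths m.castSucc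
      have hm0 : ((m.castSucc : Fin (k+2)) : ℕ) = (m : ℕ) := rfl
      rw [hm0] at lm
      by_cases hz : (m : ℕ) = 0
      · rw [if_pos hz] at lm
        have hc1 : cnt (u ++ [m]) 0 = cnt u 0 + 1 := by
          rw [cnt_concat, if_pos hz]
        have hc2 : (u ++ [m]).count 0 = cnt (u ++ [m]) 0 := by
          simpa using count_eq_cnt (u ++ [m]) 0
        rw [hz] at lm
        omega
      · rw [if_neg hz] at lm
        have hle : (⟨(m:ℕ) - 1, by omega⟩ : Fin (k+1)) ≤ m := by
          simp only [Fin.le_def]; omega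
        have hm := hmono (u.length + 1) ⟨(m:ℕ) - 1, by omega⟩ m hle
        rw [List.take_of_length_le (by simp)] at hm
        have hma := count_eq_cnt (u ++ [m]) m
        have hmb := count_eq_cnt (u ++ [m]) (⟨(m:ℕ) - 1, by omega⟩ : Fin (k+1))
        rw [hma, hmb] at hm
        have hv : ((⟨(m:ℕ) - 1, by omega⟩ : Fin (k+1)) : ℕ) = (m:ℕ) - 1 := rfl
        rw [hv] at hm
        rw [cnt_concat, cnt_concat] at hm
        have h1 : ¬((m:ℕ) = (m:ℕ) - 1) := by omega
        rw [if_pos rfl, if_neg h1] at hm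
        omega
    cases hsrc : s' m.castSucc with
    | nil => rw [hsrc] at hpos; simp at hpos
    | cons x rest =>
      refine ⟨fun j => if j = m.castSucc then rest
        else if j = m.succ then (if (j:ℕ) = k+1 then s' j ++ [x] else x :: s' j)
        else s' j, ?_⟩
      rw [act_concat, h']
      simp only [Option.bind_some, applyMove.eq_def, hsrc]

lemma three_to_one {n k : ℕ} (w : List (Fin (k+1)))
    (hmono : ∀ t : ℕ, ∀ i j : Fin (k+1), i ≤ j → (w.take t).count j ≤ (w.take t).count i)
    (htot : ∀ i : Fin (k+1), w.count i = n) :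
    ∃ out : List ℕ, out.length = n ∧
      act w (some (initConf n k)) = some (finalConf k out) := by
  obtain ⟨s, hs⟩ := run_legal w hmono (le_of_eq (htot 0))
  have lengths := run_lengths w s hs
  have hcnt : ∀ m : ℕ, m ≤ k → cnt w m = n := by
    intro m hm
    have h1 := htot ⟨m, by omega⟩
    rw [count_eq_cnt] at h1
    exact h1
  refine ⟨s ⟨k+1, by omega⟩, ?_, ?_⟩
  · have l1 := lengths ⟨k+1, by omega⟩
    simp only [Fin.val_mk] at l1
    rw [cnt_top] at l1
    have : ¬ (k + 1 = 0) := by omega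
    rw [if_neg this] at l1
    simp only [Nat.add_sub_cancel] at l1
    rw [hcnt k (le_refl k)] at l1
    omega
  · rw [hs]
    congr 1
    funext j
    by_cases hj : (j : ℕ) = k + 1
    · have : j = ⟨k+1, by omega⟩ := Fin.ext hj
      rw [this, finalConf]
      simp
    · have l1 := lengths j
      have hlen0 : (s j).length = 0 := by
        by_cases hz : (j : ℕ) = 0
        · rw [if_pos hz, hz] at l1
          rw [hcnt 0 (by omega)] at l1
          omega
        · rw [if_neg hz] at l1
          have hjk : (j : ℕ) ≤ k := by have := j.isLt; omega
          rw [hcnt (j:ℕ) hjk, hcnt ((j:ℕ)-1) (by omega)] at l1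
          omega
      rw [List.length_eq_zero_iff] at hlen0
      rw [hlen0, finalConf]
      simp [hj]

lemma one_to_three {n k : ℕ} (w : List (Fin (k+1))) (out : List ℕ)
    (hlen : out.length = n)
    (hs : act w (some (initConf n k)) = some (finalConf k out)) :
    (∀ t : ℕ, ∀ i j : Fin (k+1), i ≤ j → (w.take t).count j ≤ (w.take t).count i) ∧
      (∀ i : Fin (k+1), w.count i = n) := by
  -- every prefix is legal
  have hleg : ∀ t : ℕ, ∃ st : Conf k, act (w.take t) (some (initConf n k)) = some st := by
    intro t
    cases hcase : act (w.take t) (some (initConf n k)) with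
    | some st => exact ⟨st, rfl⟩
    | none =>
      exfalso
      have : act w (some (initConf n k)) = none := by
        rw [← List.take_append_drop t w, act_append, hcase, act_none]
      rw [this] at hs; simp at hs
  -- consecutive count inequalities on prefixes, as cnt
  have hcons : ∀ t m : ℕ, 1 ≤ m → m ≤ k + 1 →
      cnt (w.take t) m ≤ cnt (w.take t) (m - 1) := by
    intro t m h1 h2
    obtain ⟨st, hst⟩ := hleg t
    have l1 := run_lengths (w.take t) st hst ⟨m, by omega⟩
    simp only [Fin.val_mk] at l1
    rw [if_neg (by omega)] at l1
    omega
  have hchain : ∀ t b : ℕ, b ≤ k + 1 → ∀ a : ℕ, a ≤ b → cnt (w.take t) b ≤ cnt (w.take t) a := by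
    intro t b
    induction b with
    | zero => intro _ a ha; rw [Nat.le_zero.mp ha]
    | succ b ihb =>
      intro hbk a hab
      rcases Nat.eq_or_lt_of_le hab with h | h
      · rw [h]
      · have step := hcons t (b+1) (by omega) hbk
        simp only [Nat.add_sub_cancel] at step
        exact le_trans step (ihb (by omega) a (by omega))
  constructor
  · intro t i j hij
    rw [count_eq_cnt, count_eq_cnt]
    exact hchain t (j:ℕ) (by have := j.isLt; omega) (i:ℕ) hij
  · -- totals
    have lengths := run_lengths w _ hs
    have hfc : ∀ j : Fin (k+2), (j : ℕ) ≠ k + 1 → finalConf k out j = [] := by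
      intro j hj; rw [finalConf]; simp [hj]
    have hw0 : cnt w 0 = n := by
      have l1 := lengths ⟨0, by omega⟩
      simp only [Fin.val_mk] at l1
      rw [hfc ⟨0, by omega⟩ (by simp)] at l1
      simpa using l1
    have hstep : ∀ m : ℕ, 1 ≤ m → m ≤ k → cnt w m = cnt w (m-1) := by
      intro m h1 h2
      have l1 := lengths ⟨m, by omega⟩
      simp only [Fin.val_mk] at l1
      rw [if_neg (by omega), hfc ⟨m, by omega⟩ (by simp; omega)] at l1
      simpa using l1
    have hall : ∀ m : ℕ, m ≤ k → cnt w m = n := by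
      intro m
      induction m with
      | zero => intro _; exact hw0
      | succ m ihm =>
        intro hm
        have := hstep (m+1) (by omega) hm
        simp only [Nat.add_sub_cancel] at this
        rw [this]; exact ihm (by omega)
    intro i
    rw [count_eq_cnt]
    exact hall (i:ℕ) (by have := i.isLt; omega)

section Counting
variable {α : Type*} [DecidableEq α]

lemma count_take_card (l : List α) (T : ℕ) (v : α) :
    (l.take T).count v
      = (Finset.univ.filter fun p : Fin l.length => (p:ℕ) < T ∧ l.get p = v).card := by
  induction l generalizing T with
  | nil => simp
  | cons a l ih =>
    cases T with
    | zero => simp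
    | succ T =>
      rw [List.take_succ_cons, List.count_cons, ih T]
      simp only [Finset.card_filter, List.length_cons]
      rw [Fin.sum_univ_succ]
      simp only [Fin.val_succ, Fin.val_zero, List.get_eq_getElem, List.getElem_cons_zero,
        List.getElem_cons_succ, Nat.succ_lt_succ_iff, Nat.zero_lt_succ, true_and, beq_iff_eq]
      by_cases hav : a = v <;> simp [hav, Nat.add_comm]

lemma count_card (l : List α) (v : α) :
    l.count v = (Finset.univ.filter fun p : Fin l.length => l.get p = v).card := by
  rw [← List.take_length (l := l), count_take_card]
  rw [List.take_length]
  congr 1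
  apply Finset.filter_congr
  intro p _
  simp [p.isLt]

lemma count_take_succ (l : List α) (p : Fin l.length) (v : α) :
    (l.take ((p:ℕ)+1)).count v
      = (l.take (p:ℕ)).count v + if l.get p = v then 1 else 0 := by
  rw [← List.take_concat_get (l := l) (i := p) p.isLt, List.concat_eq_append, List.count_append]
  congr 1
  rcases eq_or_ne (l.get p) v with h | h
  · rw [if_pos h]
    have : l[(p:ℕ)] = v := h
    rw [this]; simp
  · rw [if_neg h]
    have : l[(p:ℕ)] ≠ v := h
    simp [List.count_singleton', this]

lemma count_take_mono (l : List α) {a b : ℕ} (h : a ≤ b) (v : α) :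
    (l.take a).count v ≤ (l.take b).count v := by
  have e : l.take a = (l.take b).take a := by
    rw [List.take_take, Nat.min_eq_left h]
  rw [e]
  exact List.Sublist.count_le v (List.take_sublist _ _)

lemma occ_lt_occ (l : List α) {v : α} (p q : Fin l.length) (hp : l.get p = v)
    (hpq : (p:ℕ) < (q:ℕ)) : (l.take (p:ℕ)).count v < (l.take (q:ℕ)).count v := by
  have h1 := count_take_succ l p v
  rw [if_pos hp] at h1
  have h2 := count_take_mono l (show (p:ℕ)+1 ≤ (q:ℕ) from hpq) v
  omega

lemma occ_unique (l : List α) {v : α} {t : ℕ} (p q : Fin l.length)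
    (hp : l.get p = v) (hq : l.get q = v)
    (hcp : (l.take (p:ℕ)).count v = t) (hcq : (l.take (q:ℕ)).count v = t) : p = q := by
  rcases lt_trichotomy ((p:ℕ)) ((q:ℕ)) with h | h | h
  · have := occ_lt_occ l p q hp h; omega
  · exact Fin.ext h
  · have := occ_lt_occ l q p hq h; omega

lemma exists_occurrence (l : List α) (v : α) (t : ℕ) (h : t < l.count v) :
    ∃ p : Fin l.length, l.get p = v ∧ (l.take (p:ℕ)).count v = t := by
  have hex : ∃ j : ℕ, t < (l.take (j+1)).count v :=
    ⟨l.length, by rw [List.take_of_length_le (by omega)]; exact h⟩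
  classical
  set p := Nat.find hex with hpdef
  have hp : t < (l.take (p+1)).count v := Nat.find_spec hex
  have hle : (l.take p).count v ≤ t := by
    cases hq : p with
    | zero => simp
    | succ q =>
      have hmin : ¬ t < (l.take (q+1)).count v := Nat.find_min hex (by omega)
      rw [hq] at hp
      omega
  have hplt : p < l.length := by
    by_contra hcon
    push_neg at hcon
    rw [List.take_of_length_le hcon] at hle
    rw [List.take_of_length_le (by omega)] at hp
    omega
  have hps := count_take_succ l ⟨p, hplt⟩ v
  simp only [Fin.val_mk] at hps
  by_cases hv : l.get ⟨p, hplt⟩ = v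
  · rw [if_pos hv] at hps
    exact ⟨⟨p, hplt⟩, hv, by simp only [Fin.val_mk]; omega⟩
  · rw [if_neg hv] at hps
    omega

end Counting

lemma three_to_two {n k : ℕ} (w : List (Fin (k+1)))
    (hmono : ∀ t : ℕ, ∀ i j : Fin (k+1), i ≤ j → (w.take t).count j ≤ (w.take t).count i)
    (htot : ∀ i : Fin (k+1), w.count i = n) :
    ∃ c : Fin w.length → Fin n, ∀ t : Fin n,
      (((List.finRange w.length).filter fun p => c p == t).map w.get)
        = List.finRange (k + 1) := by
  have hbound : ∀ p : Fin w.length, (w.take (p:ℕ)).count (w.get p) < n := by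
    intro p
    have h1 := count_take_succ w p (w.get p)
    rw [if_pos rfl] at h1
    have h2 : ∀ v : Fin (k+1), (w.take ((p:ℕ)+1)).count v ≤ w.count v := by
      intro v
      conv_rhs => rw [← List.take_length (l := w)]
      exact count_take_mono w (by have := p.isLt; omega) _
    have h2' := h2 (w.get p)
    rw [htot (w.get p)] at h2'
    omega
  refine ⟨fun p => ⟨(w.take (p:ℕ)).count (w.get p), hbound p⟩, ?_⟩
  intro t
  have hocc : ∀ v : Fin (k+1), ∃ p : Fin w.length,
      w.get p = v ∧ (w.take (p:ℕ)).count v = (t:ℕ) :=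
    fun v => exists_occurrence w v t (by rw [htot v]; exact t.isLt)
  choose ps hga hcnt using hocc
  have hmonops : StrictMono ps := by
    rw [Fin.strictMono_iff_lt_succ]
    intro v
    have h1 := count_take_succ w (ps v.succ) v.succ
    rw [if_pos (hga v.succ), hcnt v.succ] at h1
    have h2 := hmono (((ps v.succ):ℕ)+1) v.castSucc v.succ
      (by rw [Fin.le_def]; simp)
    rw [h1] at h2
    have h3 := count_take_succ w (ps v.succ) v.castSucc
    have hne : w.get (ps v.succ) ≠ v.castSucc := by
      rw [hga v.succ]
      intro hc
      have := congrArg Fin.val hc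
      simp at this
    rw [if_neg hne] at h3
    by_contra hcon
    push_neg at hcon
    have h4 := count_take_mono w
      (show ((ps v.succ):ℕ) ≤ ((ps v.castSucc):ℕ) from hcon) v.castSucc
    have h5 := hcnt v.castSucc
    omega
  have hcp : ∀ p : Fin w.length,
      (⟨(w.take (p:ℕ)).count (w.get p), hbound p⟩ : Fin n) = t ↔ ps (w.get p) = p := by
    intro p
    constructor
    · intro h
      have hval : (w.take (p:ℕ)).count (w.get p) = (t:ℕ) := congrArg Fin.val h
      exact occ_unique w (ps (w.get p)) p (hga _) rfl (hcnt _) hval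
    · intro h
      refine Fin.ext ?_
      have h2 := hcnt (w.get p)
      rw [h] at h2
      exact h2
  have hL : ((List.finRange w.length).filter
        fun p : Fin w.length => (⟨(w.take (p:ℕ)).count (w.get p), hbound p⟩ : Fin n) == t)
      = (List.finRange (k+1)).map ps := by
    refine (fun hp h1 h2 => List.Perm.eq_of_pairwise' (r := ((· ≤ ·) : Fin w.length → Fin w.length → Prop)) h1 h2 hp) ?_ ?_ ?_
    · refine (List.perm_ext_iff_of_nodup ((List.nodup_finRange _).filter _)
        ((List.nodup_finRange _).map hmonops.injective)).mpr ?_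
      intro p
      simp only [List.mem_filter, List.mem_finRange, true_and, beq_iff_eq, List.mem_map]
      constructor
      · intro h
        exact ⟨w.get p, (hcp p).mp h⟩
      · rintro ⟨v, -, rfl⟩
        apply (hcp (ps v)).mpr
        rw [hga v]
    · exact ((List.pairwise_lt_finRange _).filter _).imp (fun h => le_of_lt h)
    · refine List.pairwise_map.mpr ?_
      exact (List.pairwise_lt_finRange _).imp (fun h => le_of_lt (hmonops h))
  rw [hL, List.map_map]
  have : w.get ∘ ps = id := funext fun v => hga v
  rw [this, List.map_id]

lemma two_to_three {n k : ℕ} (w : List (Fin (k+1))) (c : Fin w.length → Fin n)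
    (hc : ∀ t : Fin n, (((List.finRange w.length).filter fun p => c p == t).map w.get)
        = List.finRange (k + 1)) :
    (∀ t : ℕ, ∀ i j : Fin (k+1), i ≤ j → (w.take t).count j ≤ (w.take t).count i) ∧
      (∀ i : Fin (k+1), w.count i = n) := by
  classical
  set L : Fin n → List (Fin w.length) :=
    fun t => (List.finRange w.length).filter (fun p => c p == t) with hLdef
  have hlen : ∀ t, (L t).length = k + 1 := by
    intro t
    have h := congrArg List.length (hc t)
    simpa using h
  have hmemL : ∀ (t : Fin n) (p : Fin w.length), p ∈ L t ↔ c p = t := by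
    intro t p
    simp [hLdef, List.mem_filter]
  have hsort : ∀ t, (L t).Pairwise (· < ·) := fun t => (List.pairwise_lt_finRange _).filter _
  have hval : ∀ (t : Fin n) (i : ℕ) (hi : i < (L t).length),
      ((w.get ((L t).get ⟨i, hi⟩)) : ℕ) = i := by
    intro t i hi
    have e2 := List.get_of_eq (hc t) ⟨i, by simpa using hi⟩
    simp only [List.get_eq_getElem, List.getElem_finRange, List.getElem_map] at e2
    simpa using congrArg Fin.val e2
  have hidx : ∀ (t : Fin n) (v : Fin (k+1)), (v:ℕ) < (L t).length := by
    intro t v; rw [hlen]; exact v.isLt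
  set pos : Fin n → Fin (k+1) → Fin w.length :=
    fun t v => (L t).get ⟨(v:ℕ), hidx t v⟩ with hposdef
  have hget : ∀ t v, w.get (pos t v) = v := by
    intro t v; exact Fin.ext (hval t (v:ℕ) (hidx t v))
  have hcpos : ∀ t v, c (pos t v) = t := by
    intro t v
    exact (hmemL t _).mp (List.get_mem _ _)
  have hposmono : ∀ (t : Fin n) (v v' : Fin (k+1)), v ≤ v' → pos t v ≤ pos t v' := by
    intro t v v' hv
    rcases eq_or_lt_of_le hv with h | h
    · rw [h]
    · exact le_of_lt ((List.sortedLT_iff_getElem_lt_getElem_of_lt.mpr (fun i j hi hj hij => List.pairwise_iff_getElem.mp (hsort t) i j hi hj hij)).strictMono_get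
        (show (⟨(v:ℕ), hidx t v⟩ : Fin (L t).length) < ⟨(v':ℕ), hidx t v'⟩ from
          Fin.mk_lt_mk.mpr h))
  have hposcp : ∀ p : Fin w.length, pos (c p) (w.get p) = p := by
    intro p
    have hp : p ∈ L (c p) := (hmemL _ _).mpr rfl
    obtain ⟨i, hi⟩ := List.mem_iff_get.mp hp
    have h1 : ((w.get p) : ℕ) = (i : ℕ) := by
      have h2 := hval (c p) (i:ℕ) i.isLt
      simp only [Fin.eta] at h2
      rw [hi] at h2
      exact h2
    show (L (c p)).get ⟨((w.get p):ℕ), hidx _ _⟩ = p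
    have he : (⟨((w.get p):ℕ), hidx _ _⟩ : Fin (L (c p)).length) = i := Fin.ext h1
    rw [he]; exact hi
  have key : ∀ (T : ℕ) (v : Fin (k+1)), (w.take T).count v
      = (Finset.univ.filter fun t : Fin n => ((pos t v) : ℕ) < T).card := by
    intro T v
    rw [count_take_card]
    refine Finset.card_bij' (fun p _ => c p) (fun t _ => pos t v) ?_ ?_ ?_ ?_
    · intro p hp
      simp only [Finset.mem_filter, Finset.mem_univ, true_and] at hp ⊢
      obtain ⟨hpT, hpv⟩ := hp
      have h2 : pos (c p) v = p := by rw [← hpv]; exact hposcp p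
      rw [h2]; exact hpT
    · intro t ht
      simp only [Finset.mem_filter, Finset.mem_univ, true_and] at ht ⊢
      exact ⟨ht, hget t v⟩
    · intro p hp
      simp only [Finset.mem_filter, Finset.mem_univ, true_and] at hp
      show pos (c p) v = p
      rw [← hp.2]; exact hposcp p
    · intro t ht
      exact hcpos t v
  constructor
  · intro T i j hij
    rw [key T i, key T j]
    apply Finset.card_le_card
    intro t ht
    simp only [Finset.mem_filter, Finset.mem_univ, true_and] at ht ⊢
    have h3 := hposmono t i j hij
    rw [Fin.le_def] at h3
    omega
  · intro v
    rw [← List.take_length (l := w), key w.length v]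
    rw [Finset.filter_true_of_mem (fun t _ => (pos t v).isLt)]
    simp

end Aux

/-- For a move string `w` over `{m₁, …, m_{k+1}}`, TFAE:
(1) `w ∗ I(n,k)` is a final state (all `n` elements in the output queue);
(2) `w` can be partitioned into `n` disjoint subsequences, each equal to
    `m₁ m₂ ⋯ m_{k+1}` (witnessed by a coloring of the positions of `w` by `Fin n`);
(3) every prefix `u` of `w` satisfies `|u|₁ ≥ |u|₂ ≥ ⋯ ≥ |u|_{k+1} ≥ 0`, and
    `|w|₁ = ⋯ = |w|_{k+1} = n`. -/
theorem complete_string_characterization (n k : ℕ) (w : List (Fin (k + 1))) :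
    [(∃ out : List ℕ, out.length = n ∧
        act w (some (initConf n k)) = some (finalConf k out)),
     (∃ c : Fin w.length → Fin n, ∀ t : Fin n,
        (((List.finRange w.length).filter fun p => c p == t).map w.get)
          = List.finRange (k + 1)),
     ((∀ t : ℕ, ∀ i j : Fin (k + 1), i ≤ j → (w.take t).count j ≤ (w.take t).count i) ∧
        (∀ i : Fin (k + 1), w.count i = n))].TFAE := by
  tfae_have 1 → 3 := by
    rintro ⟨out, hl, hs⟩
    exact one_to_three w out hl hs
  tfae_have 3 → 1 := by
    rintro ⟨hmono, htot⟩
    exact three_to_one w hmono htot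
  tfae_have 3 → 2 := by
    rintro ⟨hmono, htot⟩
    exact three_to_two w hmono htot
  tfae_have 2 → 3 := by
    rintro ⟨c, hc⟩
    exact two_to_three w c hc
  tfae_finish
end

section
/- For all n ≥ 0 and k ≥ 0, P(n,k) = P(n,1)^k, i.e., the permutations of n elements generated by k stacks in series are exactly the k-fold compositions π_k ∘ π_{k−1} ∘ ⋯ ∘ π_1 with each π_i ∈ P(n,1). -/
namespace SP
open List

variable {k : ℕ}

lemma act_nil (s : Option (Conf k)) : act [] s = s := rfl

lemma act_cons (a : Fin (k+1)) (w : List (Fin (k+1))) (s : Option (Conf k)) :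
    act (a :: w) s = act w (s.bind (applyMove a)) := rfl

lemma act_cons_some (a : Fin (k+1)) (w : List (Fin (k+1))) (s : Conf k) :
    act (a :: w) (some s) = act w (applyMove a s) := rfl

lemma act_append (u v : List (Fin (k+1))) (s : Option (Conf k)) :
    act (u ++ v) s = act v (act u s) := List.foldl_append

lemma act_none (w : List (Fin (k+1))) : act w none = none := by
  induction w with
  | nil => rfl
  | cons a w ih => simpa [act_cons] using ih

lemma applyMove_none (i : Fin (k+1)) (s : Conf k) (h : s i.castSucc = []) :
    applyMove i s = none := by unfold applyMove; rw [h]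

lemma applyMove_some (i : Fin (k+1)) (s : Conf k) (x : ℕ) (rest : List ℕ)
    (h : s i.castSucc = x :: rest) :
    applyMove i s = some (fun j =>
      if j = i.castSucc then rest
      else if j = i.succ then (if (j : ℕ) = k + 1 then s j ++ [x] else x :: s j)
      else s j) := by unfold applyMove; rw [h]

lemma act_cons_success {a : Fin (k+1)} {w : List (Fin (k+1))} {s F : Conf k}
    (h : act (a :: w) (some s) = some F) :
    ∃ s', applyMove a s = some s' ∧ act w (some s') = some F := by
  rcases hm : applyMove a s with _ | s'
  · rw [act_cons_some, hm, act_none] at h; simp at h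
  · exact ⟨s', rfl, by rw [act_cons_some, hm] at h; exact h⟩

end SP

namespace SP
open List

variable {k : ℕ}

lemma applyMove_map (f : ℕ → ℕ) (i : Fin (k+1)) (s : Conf k) :
    applyMove i (fun j => (s j).map f) =
      Option.map (fun (t : Conf k) (j : Fin (k+2)) => (t j).map f) (applyMove i s) := by
  rcases h : s i.castSucc with _ | ⟨x, rest⟩
  · rw [applyMove_none i s h, applyMove_none]
    · rfl
    · simp [h]
  · rw [applyMove_some i s x rest h, applyMove_some i _ (f x) (rest.map f) (by simp [h])]
    simp only [Option.map_some]
    congr 1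
    funext j
    split_ifs <;> first | rfl | simp

lemma act_map (f : ℕ → ℕ) (w : List (Fin (k+1))) (s : Conf k) :
    act w (some (fun j => (s j).map f)) =
      Option.map (fun (t : Conf k) (j : Fin (k+2)) => (t j).map f) (act w (some s)) := by
  induction w generalizing s with
  | nil => rfl
  | cons a w ih =>
    rw [act_cons_some, act_cons_some, applyMove_map]
    rcases h : applyMove a s with _ | s'
    · simp [act_none]
    · simpa using ih s'

/-- total multiset of elements in a configuration -/
def TotM (s : Conf k) : Multiset ℕ := ∑ j : Fin (k+2), ((s j : List ℕ) : Multiset ℕ)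

lemma totM_applyMove {i : Fin (k+1)} {s t : Conf k} (h : applyMove i s = some t) :
    TotM t = TotM s := by
  rcases hs : s i.castSucc with _ | ⟨x, rest⟩
  · rw [applyMove_none i s hs] at h; simp at h
  · rw [applyMove_some i s x rest hs] at h
    have ht := (Option.some.inj h).symm
    have hne : i.castSucc ≠ i.succ := by simp [Fin.ext_iff]
    have hmem : i.succ ∈ Finset.univ.erase i.castSucc :=
      Finset.mem_erase.mpr ⟨hne.symm, Finset.mem_univ _⟩
    have hsplit : ∀ g : Fin (k+2) → Multiset ℕ,
        ∑ j, g j = g i.castSucc + (g i.succ + ∑ j ∈ (Finset.univ.erase i.castSucc).erase i.succ, g j) := by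
      intro g
      rw [Finset.add_sum_erase _ g hmem, Finset.add_sum_erase _ g (Finset.mem_univ i.castSucc)]
    unfold TotM
    rw [hsplit (fun j => ((t j : List ℕ) : Multiset ℕ)), hsplit (fun j => ((s j : List ℕ) : Multiset ℕ))]
    have hts : ∀ j ∈ (Finset.univ.erase i.castSucc).erase i.succ,
        ((t j : List ℕ) : Multiset ℕ) = ((s j : List ℕ) : Multiset ℕ) := by
      intro j hj
      rcases Finset.mem_erase.mp hj with ⟨hj2, hj3⟩
      rcases Finset.mem_erase.mp hj3 with ⟨hj1, -⟩
      rw [ht]; simp [hj1, hj2]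
    rw [Finset.sum_congr rfl hts]
    have h1 : t i.castSucc = rest := by rw [ht]; simp
    have h2 : ((t i.succ : List ℕ) : Multiset ℕ) = x ::ₘ ((s i.succ : List ℕ) : Multiset ℕ) := by
      rw [ht]
      simp only [if_neg hne.symm, if_pos rfl]
      split_ifs <;> simp [Multiset.cons_swap]
    rw [h1, h2, hs]
    rw [← Multiset.singleton_add x ((s i.succ : List ℕ) : Multiset ℕ)]
    have h3 : ((x :: rest : List ℕ) : Multiset ℕ) = {x} + (rest : Multiset ℕ) := by
      simp
    rw [h3]
    ac_rfl

lemma totM_act {w : List (Fin (k+1))} {s t : Conf k} (h : act w (some s) = some t) :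
    TotM t = TotM s := by
  induction w generalizing s with
  | nil => exact congrArg TotM (Option.some.inj h).symm
  | cons a w ih =>
    rcases act_cons_success h with ⟨s', h1, h2⟩
    rw [ih h2, totM_applyMove h1]

end SP

namespace SP
open List

variable {k : ℕ}

lemma conf_congr {m : ℕ} (s : Fin m → List ℕ) (i j : Fin m) (h : (i:ℕ) = (j:ℕ)) :
    s i = s j := by congr 1; exact Fin.ext h

lemma applyMove_some' (i : Fin (k+1)) (s : Conf k) (x : ℕ) (rest : List ℕ)
    (h : s i.castSucc = x :: rest) :
    applyMove i s = some (fun j : Fin (k+2) =>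
      if (j:ℕ) = (i:ℕ) then rest
      else if (j:ℕ) = (i:ℕ)+1 then (if (j : ℕ) = k + 1 then s j ++ [x] else x :: s j)
      else s j) := by
  rw [applyMove_some i s x rest h]
  congr 1
  funext j
  simp only [Fin.ext_iff, Fin.coe_castSucc, Fin.val_succ]

lemma applyMove_out {i : Fin (k+1)} {s t : Conf k} (h : applyMove i s = some t) :
    ∃ e, t (Fin.last (k+1)) = s (Fin.last (k+1)) ++ e := by
  rcases hs : s i.castSucc with _ | ⟨x, rest⟩
  · rw [applyMove_none i s hs] at h; simp at h
  · rw [applyMove_some' i s x rest hs] at h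
    have ht := (Option.some.inj h).symm
    have hi : (i : ℕ) < k + 1 := i.isLt
    by_cases hl : k + 1 = (i:ℕ) + 1
    · refine ⟨[x], ?_⟩
      rw [ht]
      simp only [Fin.val_last]
      rw [if_neg (by omega), if_pos hl]
      simp
    · refine ⟨[], ?_⟩
      rw [ht]
      simp only [Fin.val_last]
      rw [if_neg (by omega), if_neg hl, append_nil]

lemma act_out {w : List (Fin (k+1))} {s t : Conf k} (h : act w (some s) = some t) :
    ∃ e, t (Fin.last (k+1)) = s (Fin.last (k+1)) ++ e := by
  induction w generalizing s with
  | nil => exact ⟨[], by rw [← Option.some.inj h, append_nil]⟩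
  | cons a w ih =>
    rcases act_cons_success h with ⟨s', h1, h2⟩
    rcases applyMove_out h1 with ⟨e1, he1⟩
    rcases ih h2 with ⟨e2, he2⟩
    exact ⟨e1 ++ e2, by rw [he2, he1, append_assoc]⟩

/-- the coupling invariant between a `(k+1)`-stack state, a `k`-stack state and a
`1`-stack state -/
def Cpl {k : ℕ} (s : Conf (k+1)) (t1 : Conf k) (t2 : Conf 1) : Prop :=
  (∀ (m : ℕ) (hm : m ≤ k), s ⟨m, by omega⟩ = t1 ⟨m, by omega⟩) ∧
  s ⟨k+1, by omega⟩ = t2 1 ∧ s ⟨k+2, by omega⟩ = t2 2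

lemma step_small {a : Fin (k+1)} (ha : (a:ℕ) < k) {s : Conf (k+1)} {t1 : Conf k} {t2 : Conf 1}
    (hC : Cpl s t1 t2) {x : ℕ} {rest : List ℕ} (hsrc : t1 a.castSucc = x :: rest) :
    ∃ t1a sa, applyMove a t1 = some t1a ∧ applyMove a.castSucc s = some sa ∧
      Cpl sa t1a t2 ∧ t1a (Fin.last (k+1)) = t1 (Fin.last (k+1)) := by
  have hsrc2 : s (a.castSucc.castSucc) = x :: rest := by
    rw [conf_congr s (a.castSucc.castSucc) ⟨(a:ℕ), by omega⟩ (by simp)]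
    rw [hC.1 (a:ℕ) (by omega)]
    rw [conf_congr t1 ⟨(a:ℕ), by omega⟩ a.castSucc (by simp)]
    exact hsrc
  refine ⟨_, _, applyMove_some' a t1 x rest hsrc, applyMove_some' a.castSucc s x rest hsrc2,
    ⟨?_, ?_, ?_⟩, ?_⟩
  · intro m hm
    simp only [Fin.coe_castSucc, Fin.val_succ]
    split_ifs <;>
      first
        | rfl
        | (exfalso; omega)
        | exact hC.1 m hm
        | exact congrArg (x :: ·) (hC.1 m hm)
  · simp only [Fin.coe_castSucc, Fin.val_succ]
    split_ifs <;>
      first | rfl | (exfalso; omega) | exact hC.2.1 | exact congrArg (x :: ·) hC.2.1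
  · simp only [Fin.coe_castSucc, Fin.val_succ]
    split_ifs <;>
      first | rfl | (exfalso; omega) | exact hC.2.2 | exact congrArg (x :: ·) hC.2.2
  · simp only [Fin.coe_castSucc, Fin.val_succ, Fin.val_last]
    split_ifs <;> first | rfl | (exfalso; omega)

lemma step_cross {s : Conf (k+1)} {t1 : Conf k} {t2 : Conf 1}
    (hC : Cpl s t1 t2) {x : ℕ} {rest : List ℕ}
    (hsrc : t1 ⟨k, by omega⟩ = x :: rest) :
    ∃ t1a sa, applyMove (Fin.last k) t1 = some t1a ∧
      applyMove ((Fin.last k).castSucc) s = some sa ∧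
      (∀ (m : ℕ) (hm : m ≤ k), sa ⟨m, by omega⟩ = t1a ⟨m, by omega⟩) ∧
      sa ⟨k+1, by omega⟩ = x :: t2 1 ∧ sa ⟨k+2, by omega⟩ = t2 2 ∧
      t1a ⟨k+1, by omega⟩ = t1 ⟨k+1, by omega⟩ ++ [x] := by
  have hsrc1 : t1 (Fin.last k).castSucc = x :: rest := by
    rw [conf_congr t1 ((Fin.last k).castSucc) ⟨k, by omega⟩ (by simp)]
    exact hsrc
  have hsrc2 : s ((Fin.last k).castSucc.castSucc) = x :: rest := by
    rw [conf_congr s ((Fin.last k).castSucc.castSucc) ⟨k, by omega⟩ (by simp)]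
    rw [hC.1 k (by omega)]
    exact hsrc
  refine ⟨_, _, applyMove_some' (Fin.last k) t1 x rest hsrc1,
    applyMove_some' ((Fin.last k).castSucc) s x rest hsrc2, ?_, ?_, ?_, ?_⟩
  · intro m hm
    simp only [Fin.coe_castSucc, Fin.val_last]
    split_ifs <;>
      first | rfl | (exfalso; omega) | exact hC.1 m hm | exact congrArg (x :: ·) (hC.1 m hm)
  · simp only [Fin.coe_castSucc, Fin.val_last]
    split_ifs <;>
      first | rfl | (exfalso; omega) | exact congrArg (x :: ·) hC.2.1
  · simp only [Fin.coe_castSucc, Fin.val_last]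
    split_ifs <;>
      first | rfl | (exfalso; omega) | exact hC.2.2
  · simp only [Fin.val_last]
    split_ifs <;> first | rfl | (exfalso; omega)

lemma step_out {s : Conf (k+1)} {t1 : Conf k} {t2 : Conf 1}
    (hC : Cpl s t1 t2) {x : ℕ} {r : List ℕ} (hsrc : t2 1 = x :: r) :
    ∃ sa, applyMove (1 : Fin 2) t2 =
        some (fun j : Fin 3 => if (j:ℕ) = 1 then r else if (j:ℕ) = 2 then t2 2 ++ [x] else t2 j) ∧
      applyMove (Fin.last (k+1)) s = some sa ∧
      Cpl sa t1 (fun j : Fin 3 => if (j:ℕ) = 1 then r else if (j:ℕ) = 2 then t2 2 ++ [x] else t2 j) := by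
  have hv1 : ((1 : Fin 2) : ℕ) = 1 := rfl
  have hv2 : ((1 : Fin 3) : ℕ) = 1 := rfl
  have hv3 : ((2 : Fin 3) : ℕ) = 2 := rfl
  have hsrc1 : t2 ((1 : Fin 2).castSucc) = x :: r := by
    rw [conf_congr t2 ((1 : Fin 2).castSucc) 1 (by simp [hv1, hv2])]
    exact hsrc
  have hsrc2 : s ((Fin.last (k+1)).castSucc) = x :: r := by
    rw [conf_congr s ((Fin.last (k+1)).castSucc) ⟨k+1, by omega⟩ (by simp)]
    rw [hC.2.1]
    exact hsrc
  refine ⟨_, ?_, applyMove_some' (Fin.last (k+1)) s x r hsrc2, ?_, ?_, ?_⟩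
  · rw [applyMove_some' (1 : Fin 2) t2 x r hsrc1]
    congr 1
    funext j
    simp only [hv1]
    split_ifs with h1 h2
    · rfl
    · exact congrArg (· ++ [x]) (conf_congr t2 j 2 (by rw [h2, hv3]))
    · rfl
  · intro m hm
    simp only [Fin.val_last]
    split_ifs <;> first | rfl | (exfalso; omega) | exact hC.1 m hm
  · simp only [Fin.val_last, hv2]
    split_ifs <;> first | rfl | (exfalso; omega)
  · simp only [Fin.val_last, hv3]
    split_ifs <;>
      first | rfl | (exfalso; omega) | exact congrArg (· ++ [x]) hC.2.2

end SP

namespace SP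
open List

variable {k : ℕ}

lemma finalConf_apply_ne {m : ℕ} (c : List ℕ) (j : Fin (m+2)) (h : (j:ℕ) ≠ m+1) :
    finalConf m c j = [] := by simp [finalConf, h]

lemma finalConf_apply_eq {m : ℕ} (c : List ℕ) (j : Fin (m+2)) (h : (j:ℕ) = m+1) :
    finalConf m c j = c := by simp [finalConf, h]

lemma G_small {F : Conf k} (t2 : Conf 1) :
    ∀ (v : List (Fin (k+1))) (t1 : Conf k) (s : Conf (k+1)),
    Cpl s t1 t2 → act v (some t1) = some F →
    t1 ⟨k+1, by omega⟩ ≠ F ⟨k+1, by omega⟩ →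
    ∃ (p v' : List (Fin (k+1))) (x : ℕ) (t1' : Conf k) (s' : Conf (k+1)),
      v = p ++ v' ∧ act (p.map Fin.castSucc) (some s) = some s' ∧
      act v' (some t1') = some F ∧
      t1' ⟨k+1, by omega⟩ = t1 ⟨k+1, by omega⟩ ++ [x] ∧
      (∀ (m : ℕ) (hm : m ≤ k), s' ⟨m, by omega⟩ = t1' ⟨m, by omega⟩) ∧
      s' ⟨k+1, by omega⟩ = x :: t2 1 ∧ s' ⟨k+2, by omega⟩ = t2 2 := by
  intro v
  induction v with
  | nil =>
    intro t1 s hC hv hne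
    exact absurd (congrArg (fun t : Conf k => t ⟨k+1, by omega⟩) (Option.some.inj hv)) hne
  | cons a v₀ ih =>
    intro t1 s hC hv hne
    rcases act_cons_success hv with ⟨t1a', ha, hv₀⟩
    rcases hsv : t1 a.castSucc with _ | ⟨x, rest⟩
    · rw [applyMove_none a t1 hsv] at ha; simp at ha
    by_cases hak : (a:ℕ) = k
    · -- the crossing move
      have haL : a = Fin.last k := Fin.ext (by simpa using hak)
      subst haL
      have hsrc : t1 ⟨k, by omega⟩ = x :: rest := by
        rw [conf_congr t1 ⟨k, by omega⟩ ((Fin.last k).castSucc) (by simp)]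
        exact hsv
      rcases step_cross hC hsrc with ⟨t1a, sa, h1, h2, hc1, hc2, hc3, hout⟩
      have ht1a : t1a' = t1a := by rw [ha] at h1; exact Option.some.inj h1
      subst ht1a
      refine ⟨[Fin.last k], v₀, x, t1a', sa, rfl, ?_, hv₀, hout, hc1, hc2, hc3⟩
      rw [List.map_cons, List.map_nil, act_cons_some, h2, act_nil]
    · -- a small move
      have ha' : (a:ℕ) < k := by have := a.isLt; omega
      rcases step_small ha' hC hsv with ⟨t1a, sa, h1, h2, hCa, hout⟩
      have ht1a : t1a' = t1a := by rw [ha] at h1; exact Option.some.inj h1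
      subst ht1a
      have hout' : t1a' ⟨k+1, by omega⟩ = t1 ⟨k+1, by omega⟩ := by
        rw [conf_congr t1a' ⟨k+1, by omega⟩ (Fin.last (k+1)) (by simp),
          conf_congr t1 ⟨k+1, by omega⟩ (Fin.last (k+1)) (by simp)]
        exact hout
      have hne' : t1a' ⟨k+1, by omega⟩ ≠ F ⟨k+1, by omega⟩ := by rw [hout']; exact hne
      rcases ih t1a' sa hCa hv₀ hne' with ⟨p, v', x', t1', s', hsplit, hp, hv', hout2, h5, h6, h7⟩
      refine ⟨a :: p, v', x', t1', s', by rw [hsplit]; rfl, ?_, hv', ?_, h5, h6, h7⟩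
      · rw [List.map_cons, act_cons_some, h2, hp]
      · rw [hout2, hout']

lemma lemG {c d : List ℕ} :
    ∀ (u : List (Fin 2)) (v : List (Fin (k+1))) (t1 : Conf k) (t2 : Conf 1) (s : Conf (k+1)),
    Cpl s t1 t2 →
    act v (some t1) = some (finalConf k c) →
    act u (some t2) = some (finalConf 1 d) →
    c = t1 ⟨k+1, by omega⟩ ++ t2 0 →
    ∃ w : List (Fin (k+2)), act w (some s) = some (finalConf (k+1) d) := by
  intro u
  induction u with
  | nil =>
    intro v t1 t2 s hC hv hu hc
    have ht2 : t2 = finalConf 1 d := Option.some.inj hu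
    have ht20 : t2 0 = [] := by
      rw [ht2]; exact finalConf_apply_ne d 0 (by norm_num)
    rw [ht20, List.append_nil] at hc
    have htot : TotM t1 = TotM (finalConf k c) := (totM_act hv).symm
    have htot2 : TotM (finalConf k c) = (c : Multiset ℕ) := by
      unfold TotM
      rw [Fin.sum_univ_castSucc]
      rw [Finset.sum_eq_zero (fun j _ => ?_), zero_add]
      · rw [finalConf_apply_eq c (Fin.last (k+1)) (by simp)]
      · rw [finalConf_apply_ne c j.castSucc (by simp; omega)]
        rfl
    have htot1 : TotM t1 =
        (∑ j : Fin (k+1), ((t1 j.castSucc : List ℕ) : Multiset ℕ)) + (c : Multiset ℕ) := by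
      unfold TotM
      rw [Fin.sum_univ_castSucc]
      congr 1
      rw [conf_congr t1 (Fin.last (k+1)) ⟨k+1, by omega⟩ (by simp), ← hc]
    have hzero : (∑ j : Fin (k+1), ((t1 j.castSucc : List ℕ) : Multiset ℕ)) = 0 := by
      have h0 : (∑ j : Fin (k+1), ((t1 j.castSucc : List ℕ) : Multiset ℕ)) + (c : Multiset ℕ)
          = 0 + (c : Multiset ℕ) := by
        rw [zero_add, ← htot1, htot, htot2]
      exact add_right_cancel h0
    have hsmall : ∀ (m : ℕ) (hm : m ≤ k), t1 ⟨m, by omega⟩ = [] := by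
      intro m hm
      have := (Finset.sum_eq_zero_iff.mp hzero) ⟨m, by omega⟩ (Finset.mem_univ _)
      have h2 : t1 ((⟨m, by omega⟩ : Fin (k+1)).castSucc) = [] := by
        rwa [Multiset.coe_eq_zero] at this
      rw [conf_congr t1 ⟨m, by omega⟩ ((⟨m, by omega⟩ : Fin (k+1)).castSucc) (by simp)]
      exact h2
    refine ⟨[], ?_⟩
    rw [act_nil]
    congr 1
    funext j
    by_cases h1 : (j:ℕ) ≤ k
    · rw [finalConf_apply_ne d j (by omega)]
      rw [conf_congr s j ⟨(j:ℕ), by omega⟩ rfl, hC.1 (j:ℕ) h1]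
      exact hsmall (j:ℕ) h1
    · by_cases h2 : (j:ℕ) = k+1
      · rw [finalConf_apply_ne d j (by omega), conf_congr s j ⟨k+1, by omega⟩ h2, hC.2.1, ht2]
        exact finalConf_apply_ne d 1 (by norm_num)
      · have h3 : (j:ℕ) = k+2 := by have := j.isLt; omega
        rw [finalConf_apply_eq d j (by omega), conf_congr s j ⟨k+2, by omega⟩ h3, hC.2.2, ht2]
        exact finalConf_apply_eq d 2 (by norm_num)
  | cons b u' ih =>
    intro v t1 t2 s hC hv hu hc
    rcases act_cons_success hu with ⟨t2a', hb, hu'⟩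
    by_cases hb1 : (b:ℕ) = 0
    · -- input move of the last stack
      have hb0 : b = 0 := Fin.ext hb1
      subst hb0
      rcases hsv : t2 ((0:Fin 2).castSucc) with _ | ⟨x, r⟩
      · rw [applyMove_none _ t2 hsv] at hb; simp at hb
      have hsrc0 : t2 0 = x :: r := by
        rw [conf_congr t2 0 ((0:Fin 2).castSucc) (by simp)]
        exact hsv
      have hcc : c = t1 ⟨k+1, by omega⟩ ++ x :: r := by rw [hc, hsrc0]
      have hne : t1 ⟨k+1, by omega⟩ ≠ finalConf k c ⟨k+1, by omega⟩ := by
        rw [finalConf_apply_eq c _ (by simp)]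
        intro heq
        have hlen := congrArg List.length hcc
        rw [← heq] at hlen
        simp at hlen
      rcases G_small t2 v t1 s hC hv hne with
        ⟨p, v', x', t1', s', hsplit, hp, hv', hout, hc1, hc2, hc3⟩
      rcases act_out hv' with ⟨e, he⟩
      have he' : c = t1' ⟨k+1, by omega⟩ ++ e := by
        rw [conf_congr t1' ⟨k+1, by omega⟩ (Fin.last (k+1)) (by simp), ← he]
        exact (finalConf_apply_eq c (Fin.last (k+1)) (by simp)).symm
      have hxr : [x'] ++ e = x :: r := by
        apply List.append_cancel_left (as := t1 ⟨k+1, by omega⟩)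
        rw [← List.append_assoc, ← hout, ← he', hcc]
      have hx : x' = x ∧ e = r := by
        rw [List.singleton_append] at hxr
        exact ⟨(List.cons.injEq _ _ _ _ ▸ hxr : _ ∧ _).1, ((List.cons.injEq _ _ _ _) ▸ hxr : _ ∧ _).2⟩
      obtain ⟨rfl, rfl⟩ := hx
      have ht2a := applyMove_some' (0 : Fin 2) t2 x' e hsv
      rw [hb] at ht2a
      have ht2aeq := (Option.some.inj ht2a).symm
      set L := (fun j : Fin 3 =>
        if (j:ℕ) = ((0 : Fin 2):ℕ) then e
        else if (j:ℕ) = ((0 : Fin 2):ℕ)+1 then (if (j:ℕ) = 1 + 1 then t2 j ++ [x'] else x' :: t2 j)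
        else t2 j) with hL
      have hL0 : L 0 = e := by rw [hL]; norm_num
      have hL1 : L 1 = x' :: t2 1 := by rw [hL]; norm_num
      have hL2 : L 2 = t2 2 := by rw [hL]; norm_num
      have hCnew : Cpl s' t1' L := by
        refine ⟨hc1, ?_, ?_⟩
        · rw [hc2, hL1]
        · rw [hc3, hL2]
      have hu'' : act u' (some L) = some (finalConf 1 d) := by rw [ht2aeq]; exact hu'
      have hcnew : c = t1' ⟨k+1, by omega⟩ ++ L 0 := by
        rw [hout, hL0, List.append_assoc, List.singleton_append]
        exact hcc
      rcases ih v' t1' L s' hCnew hv' hu'' hcnew with ⟨w', hw'⟩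
      exact ⟨p.map Fin.castSucc ++ w', by rw [act_append, hp, hw']⟩
    · -- output move
      have hb0 : b = 1 := by
        have := b.isLt
        exact Fin.ext (by simp; omega)
      subst hb0
      rcases hsv : t2 ((1:Fin 2).castSucc) with _ | ⟨x, r⟩
      · rw [applyMove_none _ t2 hsv] at hb; simp at hb
      have hsrc : t2 1 = x :: r := by
        rw [conf_congr t2 1 ((1:Fin 2).castSucc) (by simp)]
        exact hsv
      rcases step_out hC hsrc with ⟨sa, h2a, h2b, hCa⟩
      rw [hb] at h2a
      have ht2aeq := (Option.some.inj h2a).symm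
      set L := (fun j : Fin 3 => if (j:ℕ) = 1 then r else if (j:ℕ) = 2 then t2 2 ++ [x] else t2 j)
        with hL
      have hL0 : L 0 = t2 0 := by rw [hL]; norm_num
      have hu'' : act u' (some L) = some (finalConf 1 d) := by rw [ht2aeq]; exact hu'
      rcases ih v t1 L sa hCa hv hu'' (by rw [hL0]; exact hc) with ⟨w', hw'⟩
      exact ⟨Fin.last (k+1) :: w', by rw [act_cons_some, h2b, hw']⟩

end SP

namespace SP
open List

variable {k : ℕ}

lemma lemI :
    ∀ (w : List (Fin (k+2))) (s : Conf (k+1)) (t1 : Conf k) (t2 : Conf 1) {F : Conf (k+1)},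
    Cpl s t1 t2 → t2 0 = [] → act w (some s) = some F →
    ∃ (v : List (Fin (k+1))) (u : List (Fin 2)) (e : List ℕ) (t1f : Conf k) (t2f : Conf 1),
      act v (some t1) = some t1f ∧
      act u (some (fun j : Fin 3 => if (j:ℕ) = 0 then e else t2 j)) = some t2f ∧
      Cpl F t1f t2f ∧ t2f 0 = [] ∧
      t1f ⟨k+1, by omega⟩ = t1 ⟨k+1, by omega⟩ ++ e := by
  intro w
  induction w with
  | nil =>
    intro s t1 t2 F hC ht20 hw
    have hF : F = s := (Option.some.inj hw).symm
    subst hF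
    refine ⟨[], [], [], t1, t2, rfl, ?_, hC, ht20, (List.append_nil _).symm⟩
    rw [act_nil]
    congr 1
    funext j
    by_cases h0 : (j:ℕ) = 0
    · rw [if_pos h0, conf_congr t2 j 0 (by rw [h0]; rfl), ht20]
    · rw [if_neg h0]
  | cons b w' ih =>
    intro s t1 t2 F hC ht20 hw
    rcases act_cons_success hw with ⟨sb, hstep, hw'⟩
    have hb3 := b.isLt
    by_cases hbk : (b:ℕ) < k
    · -- small move
      have hab : b = (⟨(b:ℕ), by omega⟩ : Fin (k+1)).castSucc := Fin.ext (by simp)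
      rcases hs : s b.castSucc with _ | ⟨x, rest⟩
      · rw [applyMove_none b s hs] at hstep; simp at hstep
      have hsrc : t1 (⟨(b:ℕ), by omega⟩ : Fin (k+1)).castSucc = x :: rest := by
        rw [conf_congr t1 _ ⟨(b:ℕ), by omega⟩ (by simp),
          ← hC.1 (b:ℕ) (by omega), ← hs]
        exact conf_congr s ⟨(b:ℕ), by omega⟩ b.castSucc (by simp)
      rcases step_small (a := ⟨(b:ℕ), by omega⟩) (by simpa using hbk) hC hsrc with
        ⟨t1a, sa, h1, h2, hCa, hout⟩
      have hsb : sb = sa := by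
        rw [hab] at hstep; rw [hstep] at h2; exact Option.some.inj h2
      rw [hsb] at hw'
      rcases ih sa t1a t2 hCa ht20 hw' with ⟨v, u, e, t1f, t2f, hv, hu, hCf, ht2f0, houtf⟩
      refine ⟨⟨(b:ℕ), by omega⟩ :: v, u, e, t1f, t2f, ?_, hu, hCf, ht2f0, ?_⟩
      · rw [act_cons_some, h1, hv]
      · rw [houtf, conf_congr t1a ⟨k+1, by omega⟩ (Fin.last (k+1)) (by simp), hout,
          conf_congr t1 (Fin.last (k+1)) ⟨k+1, by omega⟩ (by simp)]
    · by_cases hbk2 : (b:ℕ) = k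
      · -- crossing move
        have hab : b = (Fin.last k).castSucc := Fin.ext (by simp [hbk2])
        rcases hs : s b.castSucc with _ | ⟨x, rest⟩
        · rw [applyMove_none b s hs] at hstep; simp at hstep
        have hsrc : t1 ⟨k, by omega⟩ = x :: rest := by
          rw [← hC.1 k (by omega), ← hs]
          exact conf_congr s ⟨k, by omega⟩ b.castSucc (by simp [hbk2])
        rcases step_cross hC hsrc with ⟨t1a, sa, h1, h2, hcc1, hcc2, hcc3, hout⟩
        have hsb : sb = sa := by
          rw [hab] at hstep; rw [hstep] at h2; exact Option.some.inj h2
        rw [hsb] at hw'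
        have hCa : Cpl sa t1a (fun j : Fin 3 => if (j:ℕ) = 1 then x :: t2 1 else t2 j) :=
          ⟨hcc1, hcc2, hcc3⟩
        have ht2x0 : (fun j : Fin 3 => if (j:ℕ) = 1 then x :: t2 1 else t2 j) 0 = [] := ht20
        rcases ih sa t1a _ hCa ht2x0 hw' with ⟨v, u, e, t1f, t2f, hv, hu, hCf, ht2f0, houtf⟩
        refine ⟨Fin.last k :: v, 0 :: u, x :: e, t1f, t2f, ?_, ?_, hCf, ht2f0, ?_⟩
        · rw [act_cons_some, h1, hv]
        · rw [act_cons_some]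
          have hQ : (fun j : Fin 3 => if (j:ℕ) = 0 then x :: e else t2 j) ((0 : Fin 2).castSucc)
              = x :: e := rfl
          rw [applyMove_some' (0 : Fin 2)
            (fun j : Fin 3 => if (j:ℕ) = 0 then x :: e else t2 j) x e hQ]
          rw [← hu]
          congr 2
          funext j
          have hj3 := j.isLt
          by_cases h0 : (j:ℕ) = 0
          · simp only [h0]; norm_num
          · by_cases h1 : (j:ℕ) = 1
            · simp only [h1]; norm_num
              exact conf_congr t2 j 1 (by rw [h1]; rfl)
            · have h2' : (j:ℕ) = 2 := by omega
              simp only [h2']; norm_num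
        · rw [houtf, hout, List.append_assoc, List.singleton_append]
      · -- output move
        have hbk3 : (b:ℕ) = k+1 := by omega
        have hab : b = Fin.last (k+1) := Fin.ext (by simp [hbk3])
        rcases hs : s b.castSucc with _ | ⟨x, r⟩
        · rw [applyMove_none b s hs] at hstep; simp at hstep
        have hsrc : t2 1 = x :: r := by
          rw [← hC.2.1, ← hs]
          exact conf_congr s ⟨k+1, by omega⟩ b.castSucc (by simp [hbk3])
        rcases step_out hC hsrc with ⟨sa, h2a, h2b, hCa⟩
        have hsb : sb = sa := by
          rw [hab] at hstep; rw [hstep] at h2b; exact Option.some.inj h2b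
        rw [hsb] at hw'
        have hL0 : (fun j : Fin 3 =>
            if (j:ℕ) = 1 then r else if (j:ℕ) = 2 then t2 2 ++ [x] else t2 j) 0 = [] := ht20
        rcases ih sa t1 _ hCa hL0 hw' with ⟨v, u, e, t1f, t2f, hv, hu, hCf, ht2f0, houtf⟩
        refine ⟨v, 1 :: u, e, t1f, t2f, hv, ?_, hCf, ht2f0, houtf⟩
        rw [act_cons_some]
        have hQ : (fun j : Fin 3 => if (j:ℕ) = 0 then e else t2 j) ((1 : Fin 2).castSucc)
            = x :: r := by
          have h' : (fun j : Fin 3 => if (j:ℕ) = 0 then e else t2 j) ((1 : Fin 2).castSucc)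
              = t2 1 := rfl
          rw [h', hsrc]
        rw [applyMove_some' (1 : Fin 2)
          (fun j : Fin 3 => if (j:ℕ) = 0 then e else t2 j) x r hQ]
        rw [← hu]
        congr 2
        funext j
        have hj3 := j.isLt
        by_cases h0 : (j:ℕ) = 0
        · simp only [h0]; norm_num
        · by_cases h1 : (j:ℕ) = 1
          · simp only [h1]; norm_num
          · have h2' : (j:ℕ) = 2 := by omega
            simp only [h2']; norm_num
            exact conf_congr t2 j 2 (by rw [h2']; rfl)

end SP

namespace SP
open List

variable {k : ℕ}

lemma totM_final (c : List ℕ) : TotM (finalConf k c) = (c : Multiset ℕ) := by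
  unfold TotM
  rw [Fin.sum_univ_castSucc]
  rw [Finset.sum_eq_zero (fun j _ => ?_), zero_add]
  · rw [finalConf_apply_eq c (Fin.last (k+1)) (by simp)]
  · rw [finalConf_apply_ne c j.castSucc (by simp; omega)]
    rfl

lemma totM_init (n : ℕ) : TotM (initConf n k) = ((List.range' 1 n : List ℕ) : Multiset ℕ) := by
  unfold TotM
  rw [Fin.sum_univ_succ]
  rw [Finset.sum_eq_zero (fun j _ => ?_), add_zero]
  · rw [show initConf n k 0 = List.range' 1 n from by simp [initConf]]
  · rw [show initConf n k j.succ = [] from by simp [initConf]]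
    rfl

lemma cpl_init (n : ℕ) (t2 : Conf 1) (h1 : t2 1 = []) (h2 : t2 2 = []) :
    Cpl (initConf n (k+1)) (initConf n k) t2 := by
  refine ⟨?_, ?_, ?_⟩
  · intro m hm
    by_cases h : m = 0 <;> simp [initConf, h]
  · rw [show initConf n (k+1) ⟨k+1, by omega⟩ = [] from by simp [initConf]]
    exact h1.symm
  · rw [show initConf n (k+1) ⟨k+2, by omega⟩ = [] from by simp [initConf]]
    exact h2.symm

lemma gen_succ_of {n : ℕ} (σ : Equiv.Perm (Fin n)) (ρ : Equiv.Perm (Fin n))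
    (hσ : Generates n k σ) (hρ : Generates n 1 ρ) : Generates n (k+1) (σ * ρ) := by
  obtain ⟨v, hv⟩ := hσ
  obtain ⟨u, hu⟩ := hρ
  set c : List ℕ := List.ofFn (fun j => (σ j : ℕ) + 1) with hcdef
  set d : List ℕ := List.ofFn (fun j => ((σ * ρ) j : ℕ) + 1) with hddef
  set f : ℕ → ℕ := fun m => (if h : m - 1 < n then ((σ ⟨m-1, h⟩ : Fin n) : ℕ) else 0) + 1
    with hfdef
  have hmap_range : (List.range' 1 n).map f = c := by
    apply List.ext_getElem (by simp [hcdef])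
    intro i h1 h2
    have hi : i < n := by simpa [hcdef] using h2
    simp only [List.getElem_map, List.getElem_range', List.getElem_ofFn, hfdef, hcdef]
    rw [dif_pos (show 1 + 1 * i - 1 < n by omega)]
    have he : 1 + 1 * i - 1 = i := by omega
    simp only [he]
  have hmap_fin : (List.ofFn fun j => ((ρ j : ℕ) + 1)).map f = d := by
    apply List.ext_getElem (by simp [hddef])
    intro i h1 h2
    have hi : i < n := by simpa [hddef] using h2
    simp only [List.getElem_map, List.getElem_ofFn, hfdef, hddef]
    rw [dif_pos (show ((ρ ⟨i, hi⟩ : Fin n) : ℕ) + 1 - 1 < n by simp)]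
    have he : ((ρ ⟨i, hi⟩ : Fin n) : ℕ) + 1 - 1 = ((ρ ⟨i, hi⟩ : Fin n) : ℕ) := by omega
    simp only [he, Fin.eta, Equiv.Perm.mul_apply]
  have hu' : act u (some (fun j : Fin 3 => if (j:ℕ) = 0 then c else [])) =
      some (finalConf 1 d) := by
    have hmap := act_map f u (initConf n 1)
    rw [hu] at hmap
    have hinit : (fun j : Fin 3 => (initConf n 1 j).map f) =
        (fun j : Fin 3 => if (j:ℕ) = 0 then c else []) := by
      funext j
      by_cases h : (j:ℕ) = 0 <;> simp [initConf, h, hmap_range]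
    have hfin : (fun j : Fin 3 => (finalConf 1 (List.ofFn fun j => ((ρ j : ℕ) + 1)) j).map f) =
        finalConf 1 d := by
      funext j
      by_cases h : (j:ℕ) = 2 <;> simp [finalConf, h, hmap_fin]
    rw [hinit] at hmap
    rw [hmap]
    simp only [Option.map_some]
    rw [hfin]
  have hCpl : Cpl (initConf n (k+1)) (initConf n k)
      (fun j : Fin 3 => if (j:ℕ) = 0 then c else []) :=
    cpl_init n _ (by norm_num) (by norm_num)
  have hccond : c = initConf n k ⟨k+1, by omega⟩ ++
      (fun j : Fin 3 => if (j:ℕ) = 0 then c else []) 0 := by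
    rw [show initConf n k ⟨k+1, by omega⟩ = [] from by simp [initConf]]
    norm_num
  rcases lemG u v (initConf n k) _ (initConf n (k+1)) hCpl hv hu' hccond with ⟨w, hw⟩
  exact ⟨w, hw⟩

end SP

namespace SP
open List

variable {k : ℕ}

lemma gen_succ_split {n : ℕ} (π : Equiv.Perm (Fin n)) (h : Generates n (k+1) π) :
    ∃ σ ρ : Equiv.Perm (Fin n), Generates n k σ ∧ Generates n 1 ρ ∧ π = σ * ρ := by
  obtain ⟨w, hw⟩ := h
  set πl : List ℕ := List.ofFn (fun j => (π j : ℕ) + 1) with hπl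
  have hCpl : Cpl (initConf n (k+1)) (initConf n k) (fun _ : Fin 3 => []) :=
    cpl_init n _ rfl rfl
  rcases lemI w (initConf n (k+1)) (initConf n k) (fun _ : Fin 3 => []) hCpl rfl hw with
    ⟨v, u, e, t1f, t2f, hv, hu, hCf, ht2f0, houtf⟩
  have ht1f : t1f = finalConf k e := by
    funext j
    by_cases hj : (j:ℕ) ≤ k
    · rw [finalConf_apply_ne e j (by omega)]
      have h1 := hCf.1 (j:ℕ) hj
      rw [finalConf_apply_ne πl ⟨(j:ℕ), by omega⟩ (by simp; omega)] at h1
      rw [conf_congr t1f j ⟨(j:ℕ), by omega⟩ rfl, ← h1]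
    · have hj2 : (j:ℕ) = k+1 := by have := j.isLt; omega
      rw [finalConf_apply_eq e j hj2, conf_congr t1f j ⟨k+1, by omega⟩ hj2, houtf]
      rw [show initConf n k ⟨k+1, by omega⟩ = [] from by simp [initConf]]
      rfl
  have ht2f : t2f = finalConf 1 πl := by
    funext j
    by_cases h0 : (j:ℕ) = 0
    · rw [conf_congr t2f j 0 (by rw [h0]; rfl), ht2f0, finalConf_apply_ne πl j (by omega)]
    · by_cases h1 : (j:ℕ) = 1
      · have h2 := hCf.2.1
        rw [finalConf_apply_ne πl (⟨k+1, by omega⟩ : Fin (k+3)) (by simp)] at h2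
        rw [conf_congr t2f j 1 (by rw [h1]; rfl), ← h2, finalConf_apply_ne πl j (by omega)]
      · have h2' : (j:ℕ) = 2 := by have := j.isLt; omega
        have h2 := hCf.2.2
        rw [finalConf_apply_eq πl (⟨k+2, by omega⟩ : Fin (k+3)) (by simp)] at h2
        rw [conf_congr t2f j 2 (by rw [h2']; rfl), ← h2, finalConf_apply_eq πl j (by omega)]
  have hperm : e.Perm (List.range' 1 n) := by
    have h1 : TotM t1f = TotM (initConf n k) := totM_act hv
    rw [ht1f, totM_final, totM_init] at h1
    exact Multiset.coe_eq_coe.mp h1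
  have hlen : e.length = n := by rw [hperm.length_eq, List.length_range']
  have hnd : e.Nodup := hperm.nodup_iff.mpr (List.nodup_range' (s := 1) (n := n))
  have hmem : ∀ x ∈ e, 1 ≤ x ∧ x < 1 + n := by
    intro x hx
    have := hperm.mem_iff.mp hx
    rwa [List.mem_range'_1] at this
  have hbound : ∀ (i : ℕ) (hi : i < n), (e[i]'(by omega)) - 1 < n := by
    intro i hi
    have := hmem _ (List.getElem_mem (by omega : i < e.length))
    omega
  set σf : Fin n → Fin n := fun i => ⟨(e[(i:ℕ)]'(by rw [hlen]; exact i.isLt)) - 1,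
    hbound _ i.isLt⟩ with hσf
  have hinj : Function.Injective σf := by
    intro i j hij
    have hi1 := hmem _ (List.getElem_mem (by rw [hlen]; exact i.isLt : (i:ℕ) < e.length))
    have hj1 := hmem _ (List.getElem_mem (by rw [hlen]; exact j.isLt : (j:ℕ) < e.length))
    have hval : (e[(i:ℕ)]'(by rw [hlen]; exact i.isLt)) - 1
        = (e[(j:ℕ)]'(by rw [hlen]; exact j.isLt)) - 1 := congrArg Fin.val hij
    have he' : (e[(i:ℕ)]'(by rw [hlen]; exact i.isLt))
        = (e[(j:ℕ)]'(by rw [hlen]; exact j.isLt)) := by omega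
    exact Fin.ext ((List.Nodup.getElem_inj_iff hnd).mp he')
  set σ : Equiv.Perm (Fin n) := Equiv.ofBijective σf (Finite.injective_iff_bijective.mp hinj)
    with hσdef
  have he_offn : e = List.ofFn (fun j => (σ j : ℕ) + 1) := by
    apply List.ext_getElem (by simp [hlen])
    intro i h1 h2
    rw [List.getElem_ofFn]
    have hge := hmem _ (List.getElem_mem h1)
    have happ : ((σ ⟨i, by omega⟩ : Fin n) : ℕ) = (e[i]'h1) - 1 := rfl
    rw [happ]
    omega
  have hσgen : Generates n k σ := ⟨v, by rw [hv, ht1f, he_offn]⟩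
  have hu2 : act u (some (fun j : Fin 3 => if (j:ℕ) = 0 then e else [])) =
      some (finalConf 1 πl) := by
    rw [← ht2f]
    exact hu
  set g : ℕ → ℕ := fun m => (if h : m - 1 < n then ((σ.symm ⟨m-1, h⟩ : Fin n) : ℕ) else 0) + 1
    with hgdef
  have hmap_e : e.map g = List.range' 1 n := by
    apply List.ext_getElem (by simp [hlen])
    intro i h1 h2
    have hi : i < n := by simpa using h2
    have h1' : i < e.length := by omega
    simp only [List.getElem_map, List.getElem_range', hgdef]
    have hge := hmem _ (List.getElem_mem h1')
    rw [dif_pos (by omega : (e[i]'h1') - 1 < n)]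
    have hmk : (⟨(e[i]'h1') - 1, by omega⟩ : Fin n) = σ ⟨i, hi⟩ := rfl
    rw [hmk, Equiv.symm_apply_apply]
    exact (by omega : i + 1 = 1 + 1 * i)
  have hmap_πl : πl.map g = List.ofFn (fun j => ((σ⁻¹ * π) j : ℕ) + 1) := by
    apply List.ext_getElem (by simp [hπl])
    intro i h1 h2
    have hi : i < n := by simpa using h2
    simp only [List.getElem_map, List.getElem_ofFn, hπl, hgdef]
    rw [dif_pos (by simp : ((π ⟨i, hi⟩ : Fin n) : ℕ) + 1 - 1 < n)]
    have he1 : ((π ⟨i, hi⟩ : Fin n) : ℕ) + 1 - 1 = ((π ⟨i, hi⟩ : Fin n) : ℕ) := by omega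
    simp only [he1, Fin.eta, Equiv.Perm.mul_apply]
    rfl
  have hρgen : Generates n 1 (σ⁻¹ * π) := by
    refine ⟨u, ?_⟩
    have hmap := act_map g u (fun j : Fin 3 => if (j:ℕ) = 0 then e else [])
    rw [hu2] at hmap
    have hinit : (fun j : Fin 3 =>
        ((fun j : Fin 3 => if (j:ℕ) = 0 then e else []) j).map g) = initConf n 1 := by
      funext j
      by_cases h0 : (j:ℕ) = 0 <;> simp [initConf, h0, hmap_e]
    have hfin : (fun j : Fin 3 => (finalConf 1 πl j).map g) =
        finalConf 1 (List.ofFn (fun j => ((σ⁻¹ * π) j : ℕ) + 1)) := by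
      funext j
      by_cases h2 : (j:ℕ) = 2 <;> simp [finalConf, h2, hmap_πl]
    rw [hinit] at hmap
    rw [hmap]
    simp only [Option.map_some]
    rw [hfin]
  exact ⟨σ, σ⁻¹ * π, hσgen, hρgen, (mul_inv_cancel_left σ π).symm⟩

end SP

namespace SP
open List

lemma act_zero_shape : ∀ (w : List (Fin 1)) (s F : Conf 0), act w (some s) = some F →
    ∃ m, F ⟨0, by omega⟩ = (s ⟨0, by omega⟩).drop m ∧
      F ⟨1, by omega⟩ = s ⟨1, by omega⟩ ++ (s ⟨0, by omega⟩).take m := by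
  intro w
  induction w with
  | nil =>
    intro s F hw
    have : F = s := (Option.some.inj hw).symm
    subst this
    exact ⟨0, by simp, by simp⟩
  | cons a w ih =>
    intro s F hw
    have ha : a = 0 := Subsingleton.elim a 0
    subst ha
    rcases act_cons_success hw with ⟨s', hstep, hw'⟩
    rcases hs : s ((0 : Fin 1).castSucc) with _ | ⟨x, rest⟩
    · rw [applyMove_none _ s hs] at hstep; simp at hstep
    rw [applyMove_some' (0 : Fin 1) s x rest hs] at hstep
    have hs' : s' = _ := (Option.some.inj hstep).symm
    rw [hs'] at hw'
    rcases ih _ F hw' with ⟨m, h1, h2⟩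
    have hs0 : s ⟨0, by omega⟩ = x :: rest := hs
    refine ⟨m + 1, ?_, ?_⟩
    · rw [h1, hs0]
      rfl
    · rw [h2, hs0]
      show s ⟨1, by omega⟩ ++ [x] ++ rest.take m = _
      rw [List.append_assoc, List.singleton_append]
      rfl

lemma zero_only_id {n : ℕ} {π : Equiv.Perm (Fin n)} (h : Generates n 0 π) : π = 1 := by
  obtain ⟨w, hw⟩ := h
  rcases act_zero_shape w _ _ hw with ⟨m, h1, h2⟩
  rw [show initConf n 0 ⟨0, by omega⟩ = List.range' 1 n from by simp [initConf]] at h1 h2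
  rw [show initConf n 0 ⟨1, by omega⟩ = [] from by simp [initConf]] at h2
  rw [show finalConf 0 (List.ofFn fun j => ((π j : ℕ) + 1)) ⟨0, by omega⟩ = [] from
    by simp [finalConf]] at h1
  rw [show finalConf 0 (List.ofFn fun j => ((π j : ℕ) + 1)) ⟨1, by omega⟩ =
      List.ofFn (fun j => ((π j : ℕ) + 1)) from by simp [finalConf]] at h2
  have hm : n ≤ m := by
    have := congrArg List.length h1
    simp at this
    omega
  rw [List.nil_append, List.take_of_length_le (by simp; omega)] at h2
  apply Equiv.ext
  intro j
  apply Fin.ext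
  have h3 := List.getElem_of_eq h2 (show (j:ℕ) < (List.ofFn fun j => ((π j : ℕ) + 1)).length
    from by simp [j.isLt])
  simp only [List.getElem_ofFn, List.getElem_range', Fin.eta] at h3
  simp
  omega

lemma act_zero_full : ∀ (l acc : List ℕ),
    act (List.replicate l.length (0 : Fin 1))
      (some (fun j : Fin 2 => if (j:ℕ) = 0 then l else acc)) =
    some (fun j : Fin 2 => if (j:ℕ) = 0 then [] else acc ++ l) := by
  intro l
  induction l with
  | nil =>
    intro acc
    rw [List.length_nil, List.replicate_zero, act_nil]
    congr 1
    funext j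
    by_cases h : (j:ℕ) = 0 <;> simp [h]
  | cons x l ih =>
    intro acc
    rw [List.length_cons, List.replicate_succ, act_cons_some]
    have hsrc : (fun j : Fin 2 => if (j:ℕ) = 0 then x :: l else acc) ((0 : Fin 1).castSucc)
        = x :: l := rfl
    rw [applyMove_some' (0 : Fin 1) _ x l hsrc]
    have hR : (fun j : Fin 2 =>
        if (j:ℕ) = ((0 : Fin 1):ℕ) then l
        else if (j:ℕ) = ((0 : Fin 1):ℕ) + 1 then
          (if (j:ℕ) = 0 + 1 then (fun j : Fin 2 => if (j:ℕ) = 0 then x :: l else acc) j ++ [x]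
           else x :: (fun j : Fin 2 => if (j:ℕ) = 0 then x :: l else acc) j)
        else (fun j : Fin 2 => if (j:ℕ) = 0 then x :: l else acc) j) =
        (fun j : Fin 2 => if (j:ℕ) = 0 then l else acc ++ [x]) := by
      funext j
      have := j.isLt
      by_cases h0 : (j:ℕ) = 0
      · simp only [h0]; norm_num
      · have h1 : (j:ℕ) = 1 := by omega
        simp only [h1]; norm_num
    rw [hR, ih (acc ++ [x])]
    congr 1
    funext j
    by_cases h0 : (j:ℕ) = 0 <;> simp [h0]

lemma id_gen_zero (n : ℕ) : Generates n 0 (1 : Equiv.Perm (Fin n)) := by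
  refine ⟨List.replicate n (0 : Fin 1), ?_⟩
  have hinit : initConf n 0 = (fun j : Fin 2 => if (j:ℕ) = 0 then List.range' 1 n else []) := rfl
  have hlen : n = (List.range' 1 n).length := by simp
  rw [hinit, show List.replicate n (0 : Fin 1) =
    List.replicate (List.range' 1 n).length (0 : Fin 1) from by rw [← hlen]]
  rw [act_zero_full (List.range' 1 n) []]
  congr 1
  funext j
  by_cases h0 : (j:ℕ) = 0
  · rw [if_pos h0, finalConf_apply_ne _ j (by omega)]
  · have h1 : (j:ℕ) = 1 := by have := j.isLt; omega
    rw [if_neg h0, finalConf_apply_eq _ j (by omega), List.nil_append]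
    apply List.ext_getElem (by simp)
    intro i hi1 hi2
    simp
    omega

end SP

theorem genPerms_eq_pow' (n k : ℕ) :
    GenPerms n k = {π : Equiv.Perm (Fin n) |
      ∃ g : Fin k → Equiv.Perm (Fin n),
        (∀ i, g i ∈ GenPerms n 1) ∧ π = (List.ofFn g).prod} := by
  induction k with
  | zero =>
    ext π
    simp only [GenPerms, Set.mem_setOf_eq]
    constructor
    · intro h
      exact ⟨fun i => i.elim0, fun i => i.elim0, by rw [SP.zero_only_id h]; simp⟩
    · rintro ⟨g, -, rfl⟩
      have hg : (List.ofFn g).prod = 1 := by simp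
      rw [hg]
      exact SP.id_gen_zero n
  | succ k ih =>
    ext π
    simp only [GenPerms, Set.mem_setOf_eq]
    constructor
    · intro h
      rcases SP.gen_succ_split π h with ⟨σ, ρ, hσ, hρ, rfl⟩
      have hσ' : σ ∈ GenPerms n k := hσ
      rw [ih] at hσ'
      rcases hσ' with ⟨g0, hg0, hσp⟩
      refine ⟨Fin.snoc g0 ρ, ?_, ?_⟩
      · intro i
        refine Fin.lastCases ?_ ?_ i
        · simpa [Fin.snoc_last] using hρ
        · intro i'; simpa [Fin.snoc_castSucc, GenPerms] using hg0 i'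
      · rw [List.ofFn_succ', List.prod_concat, Fin.snoc_last, hσp]
        simp [Fin.snoc_castSucc]
    · rintro ⟨g, hg, rfl⟩
      have hσ : (List.ofFn (fun i : Fin k => g i.castSucc)).prod ∈ GenPerms n k := by
        rw [ih]; exact ⟨fun i => g i.castSucc, fun i => hg _, rfl⟩
      have heq : (List.ofFn g).prod =
          (List.ofFn (fun i : Fin k => g i.castSucc)).prod * g (Fin.last k) := by
        rw [List.ofFn_succ', List.prod_concat]
      rw [heq]
      exact SP.gen_succ_of _ _ hσ (hg (Fin.last k))

/-- `P(n,k) = P(n,1)ᵏ`: the permutations generated by `k` stacks in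
series are exactly the `k`-fold compositions `π_k ∘ π_{k-1} ∘ ⋯ ∘ π₁` with each
`π_i ∈ P(n,1)` (here `g i` plays the role of `π_{k-i}`, and the product of the list
`[g 0, …, g (k-1)]` of permutations is their composition `g 0 ∘ g 1 ∘ ⋯ ∘ g (k-1)`). -/
theorem genPerms_eq_pow (n k : ℕ) :
    GenPerms n k = {π : Equiv.Perm (Fin n) |
      ∃ g : Fin k → Equiv.Perm (Fin n),
        (∀ i, g i ∈ GenPerms n 1) ∧ π = (List.ofFn g).prod} := by
  exact genPerms_eq_pow' n k
end

section
/- For all n, k ≥ 0, the number of permutations of n elements generated by k stacks in series satisfies |P(n,k)| ≤ 4^{nk}. -/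
namespace CardGenPermsAux

variable {k : ℕ}

/-- Two moves are independent if they are at nat-distance at least 2. -/
def Indep (a b : Fin (k+1)) : Prop := (a:ℕ)+1 < (b:ℕ) ∨ (b:ℕ)+1 < (a:ℕ)

/-- Two moves are dependent if they are at nat-distance at most 1. -/
def Dep (a b : Fin (k+1)) : Prop := (a:ℕ) = (b:ℕ) ∨ (a:ℕ)+1 = (b:ℕ) ∨ (b:ℕ)+1 = (a:ℕ)

/-- The pair-projection predicate. -/
def pp (a b : Fin (k+1)) (x : Fin (k+1)) : Bool := x = a || x = b

lemma act_nil (os : Option (Conf k)) : act ([] : List (Fin (k+1))) os = os := rfl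

lemma act_cons (a : Fin (k+1)) (w : List (Fin (k+1))) (os : Option (Conf k)) :
    act (a :: w) os = act w (os.bind (applyMove a)) := rfl

lemma act_none (w : List (Fin (k+1))) : act w (none : Option (Conf k)) = none := by
  induction w with
  | nil => rfl
  | cons a w ih => rw [act_cons]; exact ih

lemma act_append (u v : List (Fin (k+1))) (os : Option (Conf k)) :
    act (u ++ v) os = act v (act u os) := by
  simp [act, List.foldl_append]

lemma applyMove_none_iff (i : Fin (k+1)) (s : Conf k) :
    applyMove i s = none ↔ s i.castSucc = [] := by
  unfold applyMove
  rcases h : s i.castSucc with _ | ⟨x, r⟩ <;> simp [h]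

lemma castSucc_ne_succ {m : ℕ} (i : Fin m) : i.castSucc ≠ i.succ := by
  simp [Fin.ext_iff]

/-- The configuration after a successful move. -/
def moveConf (i : Fin (k+1)) (s : Conf k) (x : ℕ) (r : List ℕ) : Conf k :=
  fun t => if t = i.castSucc then r
    else if t = i.succ then (if (t : ℕ) = k + 1 then s t ++ [x] else x :: s t)
    else s t

lemma applyMove_eq_none (i : Fin (k+1)) (s : Conf k) (h : s i.castSucc = []) :
    applyMove i s = none := by
  simp [applyMove, h]

lemma applyMove_eq_some (i : Fin (k+1)) (s : Conf k) (x : ℕ) (r : List ℕ)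
    (h : s i.castSucc = x :: r) :
    applyMove i s = some (moveConf i s x r) := by
  simp only [applyMove, h]
  rfl

lemma moveConf_apply_ne (i : Fin (k+1)) (s : Conf k) (x : ℕ) (r : List ℕ)
    (t : Fin (k+2)) (h1 : t ≠ i.castSucc) (h2 : t ≠ i.succ) :
    moveConf i s x r t = s t := by
  simp [moveConf, h1, h2]

/-- Key commutation: moves at distance ≥ 2 commute. -/
lemma applyMove_comm (i j : Fin (k+1)) (h : (i:ℕ)+1 < (j:ℕ)) (s : Conf k) :
    (applyMove i s).bind (applyMove j) = (applyMove j s).bind (applyMove i) := by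
  have hj_le : (j:ℕ) ≤ k := by omega
  have h1 : i.castSucc ≠ j.castSucc := by simp [Fin.ext_iff]; omega
  have h2 : i.castSucc ≠ j.succ := by simp [Fin.ext_iff]; omega
  have h3 : i.succ ≠ j.castSucc := by simp [Fin.ext_iff]; omega
  have h4 : i.succ ≠ j.succ := by simp [Fin.ext_iff]; omega
  rcases hi : s i.castSucc with _ | ⟨x, r⟩ <;> rcases hj : s j.castSucc with _ | ⟨y, q⟩
  · rw [applyMove_eq_none i s hi, applyMove_eq_none j s hj]
    simp
  · rw [applyMove_eq_none i s hi, applyMove_eq_some j s y q hj]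
    rw [Option.bind_none, Option.bind_some]
    rw [applyMove_eq_none i _ (by rw [moveConf_apply_ne _ _ _ _ _ h1 h2]; exact hi)]
  · rw [applyMove_eq_some i s x r hi, applyMove_eq_none j s hj]
    rw [Option.bind_none, Option.bind_some]
    rw [applyMove_eq_none j _ (by rw [moveConf_apply_ne _ _ _ _ _ h1.symm h3.symm]; exact hj)]
  · rw [applyMove_eq_some i s x r hi, applyMove_eq_some j s y q hj]
    rw [Option.bind_some, Option.bind_some]
    rw [applyMove_eq_some j _ y q (by rw [moveConf_apply_ne _ _ _ _ _ h1.symm h3.symm]; exact hj)]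
    rw [applyMove_eq_some i _ x r (by rw [moveConf_apply_ne _ _ _ _ _ h1 h2]; exact hi)]
    congr 1
    funext t
    by_cases t1 : t = i.castSucc
    · subst t1
      rw [moveConf_apply_ne _ _ _ _ _ h1 h2]
      simp [moveConf, h1, h2, castSucc_ne_succ i]
    · by_cases t2 : t = i.succ
      · subst t2
        rw [moveConf_apply_ne _ _ _ _ _ h3 h4]
        simp [moveConf, h3, h4, (castSucc_ne_succ i).symm, moveConf_apply_ne _ _ _ _ _ h3 h4]
      · by_cases t3 : t = j.castSucc
        · subst t3
          simp [moveConf, h1.symm, h3.symm, (castSucc_ne_succ j)]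
        · by_cases t4 : t = j.succ
          · subst t4
            simp [moveConf, h2.symm, h4.symm, (castSucc_ne_succ j).symm,
              moveConf_apply_ne _ _ _ _ _ h2.symm h4.symm]
          · simp [moveConf, t1, t2, t3, t4]

lemma step_comm (a b : Fin (k+1)) (hab : Indep a b) (os : Option (Conf k)) :
    (os.bind (applyMove a)).bind (applyMove b) = (os.bind (applyMove b)).bind (applyMove a) := by
  rcases os with _ | s
  · simp
  · simp only [Option.bind_some]
    rcases hab with h | h
    · exact applyMove_comm a b h s
    · exact (applyMove_comm b a h s).symm

/-- A move independent of everything in `v₁` can be brought to the front. -/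
lemma act_move_front (a : Fin (k+1)) :
    ∀ (v₁ : List (Fin (k+1))), (∀ b ∈ v₁, Indep a b) →
    ∀ (v₂ : List (Fin (k+1))) (os : Option (Conf k)),
      act (v₁ ++ a :: v₂) os = act (a :: (v₁ ++ v₂)) os := by
  intro v₁
  induction v₁ with
  | nil => intro _ v₂ os; rfl
  | cons b v₁ ih =>
    intro hb v₂ os
    have hIndep : Indep a b := hb b List.mem_cons_self
    calc act ((b :: v₁) ++ a :: v₂) os = act (v₁ ++ a :: v₂) (os.bind (applyMove b)) := rfl
      _ = act (a :: (v₁ ++ v₂)) (os.bind (applyMove b)) := by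
            exact ih (fun c hc => hb c (List.mem_cons_of_mem _ hc)) v₂ _
      _ = act (v₁ ++ v₂) ((os.bind (applyMove b)).bind (applyMove a)) := rfl
      _ = act (v₁ ++ v₂) ((os.bind (applyMove a)).bind (applyMove b)) := by
            rw [step_comm a b hIndep]
      _ = act (a :: ((b :: v₁) ++ v₂)) os := rfl

lemma exists_first (a : Fin (k+1)) (v : List (Fin (k+1))) (h : a ∈ v) :
    ∃ v₁ v₂, v = v₁ ++ a :: v₂ ∧ a ∉ v₁ := by
  induction v with
  | nil => cases h
  | cons b v ih =>
    by_cases hb : b = a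
    · exact ⟨[], v, by simp [hb], by simp⟩
    · have : a ∈ v := by
        rcases List.mem_cons.mp h with h' | h'
        · exact absurd h'.symm hb
        · exact h'
      obtain ⟨v₁, v₂, rfl, hnot⟩ := ih this
      refine ⟨b :: v₁, v₂, rfl, ?_⟩
      simp only [List.mem_cons, not_or]
      exact ⟨fun h' => hb h'.symm, hnot⟩

/-- The projection lemma: if all projections onto dependent pairs agree,
the two words act identically. -/
lemma proj_act : ∀ (u v : List (Fin (k+1))),
    (∀ a b : Fin (k+1), Dep a b → u.filter (pp a b) = v.filter (pp a b)) →
    ∀ os : Option (Conf k), act u os = act v os := by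
  intro u
  induction u with
  | nil =>
    intro v h os
    cases v with
    | nil => rfl
    | cons b v' =>
      exfalso
      have := h b b (Or.inl rfl)
      simp [pp] at this
  | cons a u' ih =>
    intro v h os
    -- a occurs in v
    have hav : a ∈ v := by
      by_contra hna
      have := h a a (Or.inl rfl)
      have hfa : v.filter (pp a a) = [] := by
        rw [List.filter_eq_nil_iff]
        intro x hx hpx
        simp [pp] at hpx
        exact hna (hpx ▸ hx)
      rw [hfa] at this
      simp [pp] at this
    obtain ⟨v₁, v₂, rfl, hnot⟩ := exists_first a _ hav
    -- v₁ is killed by every projection containing a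
    have hv₁ : ∀ b : Fin (k+1), Dep a b → v₁.filter (pp a b) = [] := by
      intro b hdep
      have hh := h a b hdep
      have hpaa : pp a b a = true := by simp [pp]
      simp only [List.filter_append, List.filter_cons, hpaa, if_true] at hh
      rcases hf : v₁.filter (pp a b) with _ | ⟨c, l⟩
      · rfl
      · exfalso
        rw [hf, List.cons_append] at hh
        have hc : c = a := (List.cons.inj hh).1.symm
        have : c ∈ v₁ := List.mem_of_mem_filter (hf ▸ (List.mem_cons_self (a := c) (l := l)))
        exact hnot (hc ▸ this)
    -- every element of v₁ is independent of a
    have hindep : ∀ b ∈ v₁, Indep a b := by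
      intro b hb
      by_cases hd : Dep a b
      · exfalso
        have := hv₁ b hd
        have hbmem : b ∈ v₁.filter (pp a b) := by
          apply List.mem_filter.mpr
          exact ⟨hb, by simp [pp]⟩
        rw [this] at hbmem
        cases hbmem
      · unfold Dep at hd
        unfold Indep
        omega
    -- projections of u' and v₁ ++ v₂ agree
    have h' : ∀ c d : Fin (k+1), Dep c d →
        u'.filter (pp c d) = (v₁ ++ v₂).filter (pp c d) := by
      intro c d hdep
      have hh := h c d hdep
      by_cases hmem : pp c d a = true
      · have hacd : a = c ∨ a = d := by simpa [pp] using hmem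
        have hfil : v₁.filter (pp c d) = [] := by
          rcases hacd with rfl | rfl
          · exact hv₁ d hdep
          · have hdep' : Dep a c := by unfold Dep at hdep ⊢; omega
            have hcg : ∀ x ∈ v₁, pp c a x = pp a c x := by
              intro x _; simp [pp, Bool.or_comm]
            rw [List.filter_congr hcg]
            exact hv₁ c hdep'
        simp only [List.filter_append, List.filter_cons, hmem, if_true, hfil,
          List.nil_append] at hh ⊢
        exact (List.cons.inj hh).2
      · have hmem' : pp c d a = false := by
          revert hmem; cases (pp c d a) <;> simp
        simp only [List.filter_append, List.filter_cons, hmem', Bool.false_eq_true,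
          if_false] at hh ⊢
        exact hh
    -- conclude
    rw [act_move_front a v₁ hindep v₂ os]
    rw [act_cons, act_cons]
    exact ih (v₁ ++ v₂) h' _

lemma moveConf_castSucc (a : Fin (k+1)) (s : Conf k) (x : ℕ) (r : List ℕ) :
    moveConf a s x r a.castSucc = r := by
  simp [moveConf]

lemma moveConf_succ_len (a : Fin (k+1)) (s : Conf k) (x : ℕ) (r : List ℕ) :
    (moveConf a s x r a.succ).length = (s a.succ).length + 1 := by
  unfold moveConf
  rw [if_neg (castSucc_ne_succ a).symm, if_pos rfl]
  split <;> simp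

/-- Flow conservation: length change of each container equals inflow minus outflow. -/
lemma act_counts : ∀ (w : List (Fin (k+1))) (s t : Conf k),
    act w (some s) = some t → ∀ c : Fin (k+2),
    (t c).length + w.countP (fun i => decide (i.castSucc = c))
      = (s c).length + w.countP (fun i => decide (i.succ = c)) := by
  intro w
  induction w with
  | nil =>
    intro s t h c
    simp only [act, List.foldl_nil, Option.some.injEq] at h
    subst h; simp
  | cons a w ih =>
    intro s t h c
    rw [act_cons, Option.bind_some] at h
    rcases ha : s a.castSucc with _ | ⟨x, r⟩
    · rw [applyMove_eq_none a s ha, act_none] at h; cases h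
    · rw [applyMove_eq_some a s x r ha] at h
      have hih := ih _ _ h c
      rw [List.countP_cons, List.countP_cons]
      by_cases hc1 : a.castSucc = c
      · subst hc1
        rw [moveConf_castSucc] at hih
        have e1 : decide (a.castSucc = a.castSucc) = true := by simp
        have e2 : decide (a.succ = a.castSucc) = false := by
          simp only [decide_eq_false_iff_not]
          exact (castSucc_ne_succ a).symm
        rw [e1, e2, if_pos rfl, if_neg (by simp), ha]
        simp only [List.length_cons]
        omega
      · by_cases hc2 : a.succ = c
        · subst hc2
          rw [moveConf_succ_len a s x r] at hih
          have e1 : decide (a.castSucc = a.succ) = false := by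
            simp only [decide_eq_false_iff_not]
            exact castSucc_ne_succ a
          have e2 : decide (a.succ = a.succ) = true := by simp
          rw [e1, e2, if_neg (by simp), if_pos rfl]
          omega
        · rw [moveConf_apply_ne a s x r c (fun h' => hc1 h'.symm) (fun h' => hc2 h'.symm)] at hih
          have e1 : decide (a.castSucc = c) = false := by
            simp only [decide_eq_false_iff_not]; exact hc1
          have e2 : decide (a.succ = c) = false := by
            simp only [decide_eq_false_iff_not]; exact hc2
          rw [e1, e2]
          omega

/-- A `decide`-based occurrence counter. -/
def cnt (a : Fin (k+1)) (w : List (Fin (k+1))) : ℕ :=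
  w.countP (fun x => decide (x = a))

lemma countP_castSucc (w : List (Fin (k+1))) (v : ℕ) (hv : v < k+1) (hv2 : v < k+2) :
    w.countP (fun i => decide (i.castSucc = (⟨v, hv2⟩ : Fin (k+2)))) = cnt ⟨v, hv⟩ w := by
  unfold cnt
  apply List.countP_congr
  intro i _
  simp [decide_eq_decide, Fin.ext_iff]

lemma countP_succ_zero (w : List (Fin (k+1))) :
    w.countP (fun i => decide (i.succ = (⟨0, by omega⟩ : Fin (k+2)))) = 0 := by
  rw [List.countP_eq_zero]
  intro i _
  simp only [decide_eq_true_eq, Fin.ext_iff, Fin.val_succ, Fin.val_mk]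
  omega

lemma countP_succ (w : List (Fin (k+1))) (v : ℕ) (hv : v < k+1) (hv2 : v + 1 < k + 2) :
    w.countP (fun i => decide (i.succ = (⟨v+1, hv2⟩ : Fin (k+2)))) = cnt ⟨v, hv⟩ w := by
  unfold cnt
  apply List.countP_congr
  intro i _
  simp [decide_eq_decide, Fin.ext_iff]

/-- In a successful full run, every move occurs exactly `n` times. -/
lemma count_eq_n {n : ℕ} (w : List (Fin (k+1))) (out : List ℕ)
    (h : act w (some (initConf n k)) = some (finalConf k out)) (m : Fin (k+1)) :
    cnt m w = n := by
  have key := act_counts w _ _ h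
  suffices H : ∀ v (hv : v < k+1), cnt ⟨v, hv⟩ w = n by
    have := H m.1 m.2
    simpa using this
  intro v
  induction v with
  | zero =>
    intro hv
    have hk := key ⟨0, by omega⟩
    rw [countP_castSucc w 0 hv, countP_succ_zero] at hk
    have h1 : finalConf k out (⟨0, by omega⟩ : Fin (k+2)) = [] := by
      simp [finalConf]
    have h2 : initConf n k (⟨0, by omega⟩ : Fin (k+2)) = List.range' 1 n := by
      simp [initConf]
    rw [h1, h2] at hk
    simpa using hk
  | succ v ihv =>
    intro hv
    have hv2 : v + 1 < k + 2 := by omega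
    have hk := key ⟨v+1, hv2⟩
    rw [countP_castSucc w (v+1) hv, countP_succ w v (by omega) hv2] at hk
    have h1 : finalConf k out (⟨v+1, hv2⟩ : Fin (k+2)) = [] := by
      simp only [finalConf]
      rw [if_neg]
      simp
      omega
    have h2 : initConf n k (⟨v+1, hv2⟩ : Fin (k+2)) = [] := by
      simp only [initConf]
      rw [if_neg]
      simp
    rw [h1, h2, ihv (by omega)] at hk
    simpa using hk

/-- The diagonal projection is a replicate. -/
lemma filter_pp_self (w : List (Fin (k+1))) (a : Fin (k+1)) :
    w.filter (pp a a) = List.replicate (cnt a w) a := by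
  induction w with
  | nil => rfl
  | cons c w ih =>
    rw [List.filter_cons]
    unfold cnt at ih ⊢
    rw [List.countP_cons]
    by_cases hca : c = a
    · subst hca
      simp [pp, ih, List.replicate_succ]
    · simp [pp, hca, ih]

lemma countP_pp (a b : Fin (k+1)) (hab : a ≠ b) (w : List (Fin (k+1))) :
    w.countP (pp a b) = cnt a w + cnt b w := by
  induction w with
  | nil => rfl
  | cons c w ih =>
    unfold cnt at ih ⊢
    rw [List.countP_cons, List.countP_cons, List.countP_cons, ih]
    by_cases hca : c = a
    · subst hca
      have hcb : ¬ c = b := fun h' => hab h'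
      simp [pp, hcb]
      omega
    · by_cases hcb : c = b
      · subst hcb
        simp [pp, hca]
        omega
      · simp [pp, hca, hcb]

/-- Encoding of the projection onto a pair as a Boolean word. -/
def projB (a b : Fin (k+1)) (w : List (Fin (k+1))) : List Bool :=
  w.filterMap (fun x => if x = a then some false else if x = b then some true else none)

lemma filter_eq_map_projB (a b : Fin (k+1)) (hab : a ≠ b) (w : List (Fin (k+1))) :
    w.filter (pp a b) = (projB a b w).map (fun t => bif t then b else a) := by
  induction w with
  | nil => rfl
  | cons c w ih =>
    rw [List.filter_cons]
    unfold projB at ih ⊢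
    rw [List.filterMap_cons]
    by_cases hca : c = a
    · subst hca
      simp [pp, ih, hab]
    · by_cases hcb : c = b
      · subst hcb
        simp [pp, hca, ih]
      · simp [pp, hca, hcb, ih]

lemma length_projB (a b : Fin (k+1)) (hab : a ≠ b) (w : List (Fin (k+1))) :
    (projB a b w).length = cnt a w + cnt b w := by
  have h1 : (w.filter (pp a b)).length = (projB a b w).length := by
    rw [filter_eq_map_projB a b hab w, List.length_map]
  rw [← h1, ← List.countP_eq_length_filter, countP_pp a b hab w]

end CardGenPermsAux

/-- For all `n, k ≥ 0`, `|P(n,k)| ≤ 4^{nk}`. -/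
theorem card_genPerms_le (n k : ℕ) : (GenPerms n k).ncard ≤ 4 ^ (n * k) := by
  classical
  open CardGenPermsAux in
  have key : ∀ π : GenPerms n k, ∃ w : List (Fin (k+1)),
      act w (some (initConf n k))
        = some (finalConf k (List.ofFn fun j => ((π : Equiv.Perm (Fin n)) j : ℕ) + 1)) :=
    fun π => π.2
  choose wit hwit using key
  have hcount : ∀ (π : GenPerms n k) (m : Fin (k+1)), CardGenPermsAux.cnt m (wit π) = n :=
    fun π m => CardGenPermsAux.count_eq_n (wit π) _ (hwit π) m
  -- the encoding
  let E : GenPerms n k → (Fin k → List.Vector Bool (2 * n)) := fun π c =>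
    ⟨CardGenPermsAux.projB c.castSucc c.succ (wit π), by
      rw [CardGenPermsAux.length_projB _ _ (CardGenPermsAux.castSucc_ne_succ c) (wit π),
        hcount π, hcount π]
      omega⟩
  have hinj : Function.Injective E := by
    intro π π' hE
    have hproj : ∀ a b : Fin (k+1), CardGenPermsAux.Dep a b →
        (wit π).filter (CardGenPermsAux.pp a b) = (wit π').filter (CardGenPermsAux.pp a b) := by
      have hadj : ∀ a b : Fin (k+1), (a:ℕ)+1 = (b:ℕ) →
          (wit π).filter (CardGenPermsAux.pp a b)
            = (wit π').filter (CardGenPermsAux.pp a b) := by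
        intro a b hab
        have hak : (a:ℕ) < k := by have := b.2; omega
        set c : Fin k := ⟨(a:ℕ), hak⟩ with hc
        have hca : c.castSucc = a := by simp [Fin.ext_iff, hc]
        have hcb : c.succ = b := by simp [Fin.ext_iff, hc]; omega
        have hEc := congrFun hE c
        have hv : CardGenPermsAux.projB c.castSucc c.succ (wit π)
            = CardGenPermsAux.projB c.castSucc c.succ (wit π') := congrArg Subtype.val hEc
        rw [hca, hcb] at hv
        have hne : a ≠ b := by intro h'; rw [h'] at hab; omega
        rw [CardGenPermsAux.filter_eq_map_projB a b hne,
          CardGenPermsAux.filter_eq_map_projB a b hne, hv]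
      intro a b hdep
      rcases hdep with h1 | h1 | h1
      · have : a = b := Fin.ext h1
        subst this
        rw [CardGenPermsAux.filter_pp_self, CardGenPermsAux.filter_pp_self,
          hcount π, hcount π']
      · exact hadj a b h1
      · have hcomm : ∀ w : List (Fin (k+1)),
            w.filter (CardGenPermsAux.pp a b) = w.filter (CardGenPermsAux.pp b a) := by
          intro w
          apply List.filter_congr
          intro x _
          simp [CardGenPermsAux.pp, Bool.or_comm]
        rw [hcomm, hcomm]
        exact hadj b a h1
    have hact := CardGenPermsAux.proj_act (wit π) (wit π') hproj (some (initConf n k))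
    rw [hwit π, hwit π'] at hact
    have hfc := Option.some.inj hact
    have hout : (List.ofFn fun j => ((π : Equiv.Perm (Fin n)) j : ℕ) + 1)
        = List.ofFn fun j => ((π' : Equiv.Perm (Fin n)) j : ℕ) + 1 := by
      have := congrFun hfc ⟨k+1, by omega⟩
      simpa [finalConf] using this
    have hfn := List.ofFn_inj.mp hout
    apply Subtype.ext
    apply Equiv.ext
    intro j
    have := congrFun hfn j
    exact Fin.ext (by omega)
  rw [← Nat.card_coe_set_eq]
  calc Nat.card (GenPerms n k)
      ≤ Nat.card (Fin k → List.Vector Bool (2 * n)) :=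
        Nat.card_le_card_of_injective E hinj
    _ = (2 ^ (2 * n)) ^ k := by
        rw [Nat.card_eq_fintype_card, Fintype.card_fun, card_vector, Fintype.card_bool,
          Fintype.card_fin]
    _ = 4 ^ (n * k) := by
        rw [← pow_mul, show (4:ℕ) = 2^2 from rfl, ← pow_mul]
        ring_nf
end
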